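/- arXiv:2605.04810 — 6 statements merged into one kernel-verified Lean document; each statement's English description precedes it below -/
import Mathlib

section
/- There exists a constant c > 0 such that for all sufficiently small x > 0, |∫₀¹ e^{-s/x} b(s) ds| ≤ exp(-c x^{-4/5}), where b(s) = χ(s) e^{-1/s²} sin(s^{-4}). -/
open Real Set intervalIntegral

noncomputable def Hf (x : ℝ) : ℂ → ℂ := fun w =>
  Complex.exp (w - Complex.exp w / (x:ℂ) - Complex.exp (-(2*w)) + Complex.I * Complex.exp (-(4*w)))

lemma Hf_diff (x : ℝ) : Differentiable ℂ (Hf x) := by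
  unfold Hf
  fun_prop

lemma Hf_norm (x t y : ℝ) : ‖Hf x (↑t + ↑y * Complex.I)‖ =
    Real.exp (t - Real.exp t / x * Real.cos y - Real.exp (-(2*t)) * Real.cos (2*y)
      + Real.exp (-(4*t)) * Real.sin (4*y)) := by
  unfold Hf
  rw [Complex.norm_exp]
  congr 1
  simp [Complex.add_re, Complex.sub_re, Complex.div_ofReal_re, Complex.exp_re, Complex.exp_im,
    Complex.mul_re, Complex.mul_im, Complex.add_im, Complex.sub_im, Complex.neg_re,
    Complex.neg_im, Real.cos_neg, Real.sin_neg]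
  ring

noncomputable def Fc (x : ℝ) : ℝ → ℂ := fun s =>
  Complex.exp (-(↑s/(x:ℂ)) - ((s:ℂ))⁻¹^2 + Complex.I * ((s:ℂ))⁻¹^4)

lemma Fc_cont (x : ℝ) : ContinuousOn (Fc x) (Ioi (0:ℝ)) := by
  apply Complex.continuous_exp.comp_continuousOn
  have c1 : ContinuousOn (fun s:ℝ => ((s:ℂ))) (Ioi (0:ℝ)) := Complex.continuous_ofReal.continuousOn
  have c2 : ContinuousOn (fun s:ℝ => ((s:ℂ))⁻¹) (Ioi (0:ℝ)) := by
    apply c1.inv₀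
    intro s hs
    exact_mod_cast ne_of_gt (mem_Ioi.mp hs)
  exact (((c1.div_const _).neg.sub (c2.pow 2)).add (continuousOn_const.mul (c2.pow 4)))

lemma smul_Fc_exp (x t : ℝ) : Real.exp t • Fc x (Real.exp t) = Hf x ↑t := by
  unfold Fc Hf
  have hs : ((Real.exp t : ℝ) : ℂ) = Complex.exp ↑t := (Complex.ofReal_exp t)
  rw [Complex.real_smul, hs, ← Complex.exp_add]
  congr 1
  have h2 : (Complex.exp ↑t)⁻¹ ^ 2 = Complex.exp (-(2*(t:ℂ))) := by
    rw [← Complex.exp_neg, ← Complex.exp_nat_mul]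
    norm_num
  have h4 : (Complex.exp ↑t)⁻¹ ^ 4 = Complex.exp (-(4*(t:ℂ))) := by
    rw [← Complex.exp_neg, ← Complex.exp_nat_mul]
    norm_num
  rw [h2, h4]
  ring

set_option maxHeartbeats 1600000 in
lemma key (x K : ℝ) (hx : 0 < x) (hK : 100 ≤ K) (hxK : 1/x = K^5) :
    ‖∫ s in Real.exp (-(K^4))..(1/4:ℝ), Fc x s‖ ≤
      Real.exp (-(K^4)/2) * K^4 + Real.exp (-(K^4)) + Real.exp (-(K^4)) := by
  have hK0 : (0:ℝ) < K := by linarith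
  have hK4 : (100:ℝ) ≤ K^4 := le_trans hK (le_self_pow₀ (by linarith) (by norm_num))
  set a : ℝ := -(K^4) with ha
  set b : ℝ := Real.log (1/4) with hbdef
  have hb4 : Real.exp b = 1/4 := Real.exp_log (by norm_num)
  have hb0 : b ≤ 0 := Real.log_nonpos (by norm_num) (by norm_num)
  have hbm3 : -3 ≤ b := by
    have h4 : Real.log 4 ≤ 3 := by
      have := Real.log_le_sub_one_of_pos (x := (4:ℝ)) (by norm_num)
      linarith
    have : b = -Real.log 4 := by rw [hbdef, one_div, Real.log_inv]
    linarith
  have hab : a ≤ b := by rw [ha]; linarith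
  have hdiff : DifferentiableOn ℂ (Hf x) (Set.uIcc ((a:ℂ)).re (((b:ℂ) + (-(π/8):ℝ) * Complex.I)).re ×ℂ Set.uIcc ((a:ℂ)).im (((b:ℂ) + (-(π/8):ℝ) * Complex.I)).im) := by
    apply Differentiable.differentiableOn
    unfold Hf; fun_prop
  have hrect := Complex.integral_boundary_rect_eq_zero_of_differentiableOn (Hf x)
    ((a:ℂ)) ((b:ℂ) + (-(π/8):ℝ) * Complex.I) hdiff
  simp only [Complex.add_re, Complex.add_im, Complex.ofReal_re, Complex.ofReal_im,
    Complex.neg_re, Complex.neg_im, Complex.mul_re, Complex.mul_im, Complex.I_re, Complex.I_im,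
    Complex.ofReal_neg, Complex.ofReal_zero, mul_zero, mul_one, zero_mul, sub_zero,
    add_zero, zero_add, neg_zero, neg_neg, smul_eq_mul] at hrect
  -- name the four integrals
  have hT : (∫ t in a..b, Hf x ↑t) =
      (∫ t in a..b, Hf x (↑t + -↑(π/8) * Complex.I))
      - Complex.I * (∫ y in (0:ℝ)..-(π/8), Hf x (↑b + ↑y * Complex.I))
      + Complex.I * (∫ y in (0:ℝ)..-(π/8), Hf x (↑a + ↑y * Complex.I)) := by
    linear_combination hrect
  -- substitution s = exp t
  have himg : Real.exp '' (Set.uIcc a b) ⊆ Ioi (0:ℝ) := by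
    rintro u ⟨t, _, rfl⟩; exact Set.mem_Ioi.2 (Real.exp_pos t)
  have hFcont : ContinuousOn (Fc x) (Real.exp '' (Set.uIcc a b)) := (Fc_cont x).mono himg
  have hsub : ∫ s in Real.exp a..(1/4:ℝ), Fc x s = ∫ t in a..b, Hf x ↑t := by
    have h := intervalIntegral.integral_comp_smul_deriv' (a:=a) (b:=b)
        (f := Real.exp) (f' := Real.exp) (g := Fc x)
        (fun t _ => Real.hasDerivAt_exp t) Real.continuous_exp.continuousOn hFcont
    rw [hb4] at h
    rw [← h]
    apply intervalIntegral.integral_congr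
    intro t _
    simpa [Function.comp] using (smul_Fc_exp x t)
  -- basic numeric facts
  have hple : π ≤ 4 := Real.pi_le_four
  have hpip : 0 < π := Real.pi_pos
  have hcos8 : (1/2:ℝ) ≤ Real.cos (π/8) := by
    have h := Real.one_sub_sq_div_two_le_cos (x := π/8)
    nlinarith
  have hxinv : x⁻¹ = K^5 := by rw [← one_div, hxK]
  -- bottom edge bound
  have hBot : ‖∫ t in a..b, Hf x (↑t + -↑(π/8) * Complex.I)‖ ≤ Real.exp (a/2) * K^4 := by
    calc ‖∫ t in a..b, Hf x (↑t + -↑(π/8) * Complex.I)‖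
        ≤ Real.exp (a/2) * |b - a| := by
          apply intervalIntegral.norm_integral_le_of_norm_le_const
          intro t ht
          rw [Set.uIoc_of_le hab] at ht
          have htb : t ≤ 0 := le_trans ht.2 hb0
          have h1 : (↑t + -↑(π/8) * Complex.I : ℂ) = ↑t + ↑(-(π/8):ℝ) * Complex.I := by
            push_cast; ring
          rw [h1, Hf_norm, Real.exp_le_exp,
            show (2:ℝ)*(-(π/8)) = -(π/4) by ring, show (4:ℝ)*(-(π/8)) = -(π/2) by ring,
            Real.cos_neg, Real.cos_neg, Real.sin_neg, Real.sin_pi_div_two, Real.cos_pi_div_four]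
          have he2 : (0:ℝ) ≤ Real.exp (-(2*t)) * (Real.sqrt 2/2) := by positivity
          have hcx : (0:ℝ) ≤ Real.exp t / x * Real.cos (π/8) :=
            mul_nonneg (by positivity) (le_trans (by norm_num) hcos8)
          rcases le_total (Real.exp t) K⁻¹ with h1c | h2c
          · have hinv : K ≤ (Real.exp t)⁻¹ := by
              have := inv_anti₀ (Real.exp_pos t) h1c
              rwa [inv_inv] at this
            have h4 : K^4 ≤ ((Real.exp t)⁻¹)^4 := pow_le_pow_left₀ hK0.le hinv 4
            have hexp4 : Real.exp (-(4*t)) = ((Real.exp t)⁻¹)^4 := by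
              rw [← Real.exp_neg, ← Real.exp_nat_mul]; norm_num
            rw [hexp4, ha]
            linarith
          · have hEx : K^4 * (1/2) ≤ Real.exp t / x * Real.cos (π/8) := by
              have hK4x : K^4 ≤ Real.exp t / x := by
                rw [div_eq_mul_inv, hxinv]
                calc K^4 = K⁻¹ * K^5 := by field_simp
                  _ ≤ Real.exp t * K^5 := by
                    apply mul_le_mul_of_nonneg_right h2c (by positivity)
              exact mul_le_mul hK4x hcos8 (by norm_num) (by positivity)
            have hE4 : (0:ℝ) ≤ Real.exp (-(4*t)) := Real.exp_nonneg _
            rw [ha]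
            nlinarith
        _ ≤ Real.exp (a/2) * K^4 := by
          apply mul_le_mul_of_nonneg_left _ (Real.exp_nonneg _)
          rw [abs_of_nonneg (sub_nonneg.2 hab), ha]
          linarith
  -- right edge bound
  have hRight : ‖∫ y in (0:ℝ)..-(π/8), Hf x (↑b + ↑y * Complex.I)‖ ≤ Real.exp a := by
    calc ‖∫ y in (0:ℝ)..-(π/8), Hf x (↑b + ↑y * Complex.I)‖
        ≤ Real.exp a * |(-(π/8)) - 0| := by
          apply intervalIntegral.norm_integral_le_of_norm_le_const
          intro y hy
          have hy' : y ∈ Set.Ioc (-(π/8)) 0 := by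
            rwa [Set.uIoc_of_ge (by linarith : -(π/8) ≤ (0:ℝ))] at hy
          have hy1 : -(π/8) ≤ y := hy'.1.le
          have hy2 : y ≤ 0 := hy'.2
          rw [Hf_norm, Real.exp_le_exp]
          have hcy : (1/2:ℝ) ≤ Real.cos y := by
            have h := Real.one_sub_sq_div_two_le_cos (x := y)
            nlinarith
          have hc2y : (0:ℝ) ≤ Real.cos (2*y) := by
            have h := Real.one_sub_sq_div_two_le_cos (x := 2*y)
            nlinarith
          have hs4y : Real.sin (4*y) ≤ 0 :=
            Real.sin_nonpos_of_nonpos_of_neg_pi_le (by linarith) (by linarith)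
          have hE2 : (0:ℝ) ≤ Real.exp (-(2*b)) * Real.cos (2*y) :=
            mul_nonneg (Real.exp_nonneg _) hc2y
          have hE4 : Real.exp (-(4*b)) * Real.sin (4*y) ≤ 0 :=
            mul_nonpos_of_nonneg_of_nonpos (Real.exp_nonneg _) hs4y
          have hbx : K^5 * (1/4 * (1/2)) ≤ Real.exp b / x * Real.cos y := by
            have : Real.exp b / x = 1/4 * K^5 := by
              rw [hb4, div_eq_mul_inv, hxinv]
            rw [this]
            have hK5 : (0:ℝ) < K^5 := by positivity
            nlinarith
          rw [ha]
          have hK45 : K^4 * 8 ≤ K^5 := by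
            have h := mul_le_mul_of_nonneg_left (by linarith : (8:ℝ) ≤ K) (pow_nonneg hK0.le 4)
            calc K^4 * 8 ≤ K^4 * K := h
              _ = K^5 := by ring
          linarith [hbx, hE2, hE4, hb0, hK45]
        _ ≤ Real.exp a := by
          rw [abs_of_nonpos (by linarith : -(π/8) - 0 ≤ 0)]
          have : -(-(π/8) - 0) ≤ 1 := by linarith
          nlinarith [Real.exp_nonneg a]
  -- left edge bound
  have hLeft : ‖∫ y in (0:ℝ)..-(π/8), Hf x (↑a + ↑y * Complex.I)‖ ≤ Real.exp a := by
    calc ‖∫ y in (0:ℝ)..-(π/8), Hf x (↑a + ↑y * Complex.I)‖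
        ≤ Real.exp a * |(-(π/8)) - 0| := by
          apply intervalIntegral.norm_integral_le_of_norm_le_const
          intro y hy
          have hy' : y ∈ Set.Ioc (-(π/8)) 0 := by
            rwa [Set.uIoc_of_ge (by linarith : -(π/8) ≤ (0:ℝ))] at hy
          have hy1 : -(π/8) ≤ y := hy'.1.le
          have hy2 : y ≤ 0 := hy'.2
          rw [Hf_norm, Real.exp_le_exp]
          have hcy : (0:ℝ) ≤ Real.cos y := by
            have h := Real.one_sub_sq_div_two_le_cos (x := y)
            nlinarith
          have hc2y : (0:ℝ) ≤ Real.cos (2*y) := by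
            have h := Real.one_sub_sq_div_two_le_cos (x := 2*y)
            nlinarith
          have hs4y : Real.sin (4*y) ≤ 0 :=
            Real.sin_nonpos_of_nonpos_of_neg_pi_le (by linarith) (by linarith)
          have hE1 : (0:ℝ) ≤ Real.exp a / x * Real.cos y :=
            mul_nonneg (by positivity) hcy
          have hE2 : (0:ℝ) ≤ Real.exp (-(2*a)) * Real.cos (2*y) :=
            mul_nonneg (Real.exp_nonneg _) hc2y
          have hE4 : Real.exp (-(4*a)) * Real.sin (4*y) ≤ 0 :=
            mul_nonpos_of_nonneg_of_nonpos (Real.exp_nonneg _) hs4y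
          linarith
        _ ≤ Real.exp a := by
          rw [abs_of_nonpos (by linarith : -(π/8) - 0 ≤ 0)]
          nlinarith [Real.exp_nonneg a]
  -- combine
  rw [hsub, hT]
  have hnormI : ∀ z : ℂ, ‖Complex.I * z‖ = ‖z‖ := by
    intro z; rw [norm_mul, Complex.norm_I, one_mul]
  calc ‖(∫ t in a..b, Hf x (↑t + -↑(π/8) * Complex.I))
      - Complex.I * (∫ y in (0:ℝ)..-(π/8), Hf x (↑b + ↑y * Complex.I))
      + Complex.I * (∫ y in (0:ℝ)..-(π/8), Hf x (↑a + ↑y * Complex.I))‖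
      ≤ ‖(∫ t in a..b, Hf x (↑t + -↑(π/8) * Complex.I))
        - Complex.I * (∫ y in (0:ℝ)..-(π/8), Hf x (↑b + ↑y * Complex.I))‖
        + ‖Complex.I * (∫ y in (0:ℝ)..-(π/8), Hf x (↑a + ↑y * Complex.I))‖ := norm_add_le _ _
    _ ≤ ‖(∫ t in a..b, Hf x (↑t + -↑(π/8) * Complex.I))‖
        + ‖Complex.I * (∫ y in (0:ℝ)..-(π/8), Hf x (↑b + ↑y * Complex.I))‖
        + ‖Complex.I * (∫ y in (0:ℝ)..-(π/8), Hf x (↑a + ↑y * Complex.I))‖ := by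
          have := norm_sub_le (∫ t in a..b, Hf x (↑t + -↑(π/8) * Complex.I))
            (Complex.I * (∫ y in (0:ℝ)..-(π/8), Hf x (↑b + ↑y * Complex.I)))
          linarith
    _ ≤ Real.exp (a/2) * K^4 + Real.exp a + Real.exp a := by
          rw [hnormI, hnormI]
          have h1 := hBot; have h2 := hRight; have h3 := hLeft
          linarith


lemma exp_le_self' (s : ℝ) (h0 : 0 < s) (h1 : s ≤ 1) : Real.exp (-1/s^2) ≤ s := by
  have h2 : (0:ℝ) < s^2 := by positivity
  have hmain : 1/s ≤ Real.exp (1/s^2) := by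
    have he := Real.add_one_le_exp (1/s^2)
    have hd : 1/s ≤ 1/s^2 := by
      rw [div_le_div_iff₀ h0 h2]
      nlinarith
    linarith
  calc Real.exp (-1/s^2) = (Real.exp (1/s^2))⁻¹ := by
        rw [← Real.exp_neg, neg_div, one_div]
    _ ≤ (1/s)⁻¹ := by
        apply inv_anti₀ (by positivity) hmain
    _ = s := by simp

lemma b_cont (χ b : ℝ → ℝ) (M : ℝ) (hχc : Continuous χ)
    (hM : ∀ s ∈ Icc (0:ℝ) 1, |χ s| ≤ M) (hM0 : 0 ≤ M)
    (hb : ∀ s : ℝ, 0 < s → b s = χ s * Real.exp (-1 / s ^ 2) * Real.sin (s ^ (4:ℕ))⁻¹)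
    (hb0 : b 0 = 0) : ContinuousOn b (Icc 0 1) := by
  intro s hs
  rcases eq_or_lt_of_le hs.1 with h0 | h0
  · -- s = 0
    rw [← h0]
    have hIcc : Icc (0:ℝ) 1 = insert 0 (Ioc 0 1) := (Set.Ioc_insert_left (by norm_num)).symm
    rw [hIcc]
    rw [continuousWithinAt_insert_self]
    unfold ContinuousWithinAt
    rw [hb0]
    refine squeeze_zero_norm' (a := fun s => M * s) ?_ ?_
    · filter_upwards [self_mem_nhdsWithin] with t ht
      have ht0 : 0 < t := ht.1
      have ht1 : t ≤ 1 := ht.2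
      rw [Real.norm_eq_abs, hb t ht0, abs_mul, abs_mul]
      have e1 : |χ t| ≤ M := hM t ⟨ht0.le, ht1⟩
      have e2 : Real.exp (-1/t^2) ≤ t := exp_le_self' t ht0 ht1
      have e3 : |Real.sin ((t ^ (4:ℕ))⁻¹)| ≤ 1 := Real.abs_sin_le_one _
      have e4 : |Real.exp (-1/t^2)| = Real.exp (-1/t^2) := abs_of_pos (Real.exp_pos _)
      rw [e4]
      calc |χ t| * Real.exp (-1/t^2) * |Real.sin ((t ^ (4:ℕ))⁻¹)|
          ≤ M * Real.exp (-1/t^2) * 1 := by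
            apply mul_le_mul _ e3 (abs_nonneg _) (by positivity)
            exact mul_le_mul_of_nonneg_right e1 (Real.exp_nonneg _)
        _ = M * Real.exp (-1/t^2) := by ring
        _ ≤ M * t := mul_le_mul_of_nonneg_left e2 hM0
    · have h : Filter.Tendsto (fun t : ℝ => M * t) (nhds 0) (nhds (M * 0)) :=
        (continuous_const.mul continuous_id).tendsto 0
      rw [mul_zero] at h
      exact h.mono_left nhdsWithin_le_nhds
  · -- s > 0
    apply ContinuousAt.continuousWithinAt
    have hev : ∀ᶠ t in nhds s, b t = χ t * Real.exp (-1 / t ^ 2) * Real.sin (t ^ (4:ℕ))⁻¹ := by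
      filter_upwards [isOpen_Ioi.eventually_mem (Set.mem_Ioi.2 h0)] with t ht
      exact hb t ht
    have hgc : ContinuousAt (fun t => χ t * Real.exp (-1 / t ^ 2) * Real.sin (t ^ (4:ℕ))⁻¹) s := by
      have c0 : ContinuousAt (fun t:ℝ => -1 / t^2) s :=
        ContinuousAt.div continuousAt_const (by fun_prop) (by positivity)
      have c2 : ContinuousAt (fun t:ℝ => (t^(4:ℕ))⁻¹) s := by
        apply ContinuousAt.inv₀ (by fun_prop) (by positivity)
      exact ((hχc.continuousAt.mul (Real.continuous_exp.continuousAt.comp c0)).mul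
        (Real.continuous_sin.continuousAt.comp c2))
    exact hgc.congr (hev.mono fun t ht => ht.symm)

lemma rpow_facts (x : ℝ) (hx : 0 < x) :
    1/x = ((x ^ ((1:ℝ)/5))⁻¹)^5 ∧ x ^ (-(4:ℝ)/5) = ((x ^ ((1:ℝ)/5))⁻¹)^4 := by
  have hy0 : 0 < x ^ ((1:ℝ)/5) := Real.rpow_pos_of_pos hx _
  have h5 : (x ^ ((1:ℝ)/5))^(5:ℕ) = x := by
    rw [← Real.rpow_natCast (x ^ ((1:ℝ)/5)) 5, ← Real.rpow_mul hx.le]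
    norm_num
  constructor
  · rw [inv_pow, h5, one_div]
  · have h4 : (x ^ ((1:ℝ)/5))^(4:ℕ) = x ^ ((4:ℝ)/5) := by
      rw [← Real.rpow_natCast (x ^ ((1:ℝ)/5)) 4, ← Real.rpow_mul hx.le]
      norm_num
    rw [inv_pow, h4, show (-(4:ℝ)/5) = -((4:ℝ)/5) by norm_num, Real.rpow_neg hx.le]

lemma final_ineq (A M : ℝ) (hM : 1 ≤ M) (hA : 8*(M+4) ≤ A) (hA100 : 100 ≤ A) :
    Real.exp (-A/2) * A + (M+3) * Real.exp (-A) ≤ Real.exp (-(1/8) * A) := by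
  set u := Real.exp (A/8) with hu_def
  have hu0 : 0 < u := Real.exp_pos _
  have hu : 1 + A/8 ≤ u := by
    have := Real.add_one_le_exp (A/8)
    linarith
  have hu1 : (1:ℝ) ≤ u := by linarith
  have e2 : Real.exp (-A/2) = (u⁻¹)^4 := by
    rw [hu_def, inv_pow, ← Real.exp_nat_mul, ← Real.exp_neg]
    push_cast
    ring_nf
  have e8 : Real.exp (-A) = (u⁻¹)^8 := by
    rw [hu_def, inv_pow, ← Real.exp_nat_mul, ← Real.exp_neg]
    push_cast
    ring_nf
  have e1 : Real.exp (-(1/8) * A) = u⁻¹ := by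
    rw [hu_def, ← Real.exp_neg]
    ring_nf
  rw [e2, e8, e1]
  have key : A * u^4 + (M+3) ≤ u^7 := by
    have h3 : 2*A ≤ u^3 := by
      have hp := pow_le_pow_left₀ (by linarith : (0:ℝ) ≤ 1 + A/8) hu 3
      nlinarith [hp, hA100, sq_nonneg A, sq_nonneg (A-100)]
    have hu4 : (1:ℝ) ≤ u^4 := by
      have := pow_le_pow_left₀ (by norm_num : (0:ℝ) ≤ 1) hu1 4
      simpa using this
    have hstep : 2*A*u^4 ≤ u^7 := by nlinarith [mul_le_mul_of_nonneg_right h3 (pow_nonneg hu0.le 4)]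
    have hAM : M + 3 ≤ A := by linarith
    have hAu : A ≤ A * u^4 := by
      nlinarith [mul_nonneg (by linarith : (0:ℝ) ≤ A) (by linarith : (0:ℝ) ≤ u^4 - 1)]
    linarith
  have hrw : (u⁻¹)^4 * A + (M+3) * (u⁻¹)^8 = (A * u^4 + (M+3)) * (u⁻¹)^8 := by
    field_simp
  rw [hrw]
  calc (A * u^4 + (M+3)) * (u⁻¹)^8 ≤ u^7 * (u⁻¹)^8 :=
        mul_le_mul_of_nonneg_right key (by positivity)
    _ = u⁻¹ := by
        field_simp

set_option maxHeartbeats 2000000 in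
/-- There is c > 0 such that for all sufficiently small x > 0,
|∫₀¹ e^{-s/x} b(s) ds| ≤ exp(-c x^{-4/5}). -/
theorem stmt_1 (χ b : ℝ → ℝ)
    (hχ : ContDiff ℝ (⊤ : ℕ∞) χ)
    (hχ1 : ∀ s ∈ Icc (0:ℝ) (1/4), χ s = 1)
    (hχ0 : ∀ s : ℝ, 1/3 ≤ s → χ s = 0)
    (hb : ∀ s : ℝ, 0 < s → b s = χ s * Real.exp (-1 / s ^ 2) * Real.sin (s ^ (4:ℕ))⁻¹)
    (hb0 : b 0 = 0) :
    ∃ c > (0:ℝ), ∃ x₀ > (0:ℝ), ∀ x : ℝ, 0 < x → x < x₀ →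
      |∫ s in (0:ℝ)..1, Real.exp (-s / x) * b s| ≤ Real.exp (-c * x ^ (-(4:ℝ)/5)) := by
  obtain ⟨M₀, hM₀⟩ := (isCompact_Icc : IsCompact (Icc (0:ℝ) 1)).exists_bound_of_continuousOn
    hχ.continuous.continuousOn
  set M : ℝ := max M₀ 1 with hMdef
  have hM : ∀ s ∈ Icc (0:ℝ) 1, |χ s| ≤ M := fun s hs => by
    have := hM₀ s hs
    rw [Real.norm_eq_abs] at this
    exact le_trans this (le_max_left _ _)
  have hM1 : (1:ℝ) ≤ M := le_max_right _ _
  refine ⟨1/8, by norm_num, (1/(8*(M+4)+100))^(5:ℕ), by positivity, ?_⟩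
  intro x hx hxlt
  set K : ℝ := (x ^ ((1:ℝ)/5))⁻¹ with hKdef
  obtain ⟨hxK, hA⟩ := rpow_facts x hx
  have hK0 : (0:ℝ) < K := by
    rw [hKdef]; positivity
  have hKbig : 8*(M+4)+100 ≤ K := by
    have hqpos : (0:ℝ) < 1/(8*(M+4)+100) := by positivity
    have h1 : x ^ ((1:ℝ)/5) < 1/(8*(M+4)+100) := by
      have h2 := Real.rpow_lt_rpow hx.le hxlt (by norm_num : (0:ℝ) < 1/5)
      rwa [← Real.rpow_natCast (1/(8*(M+4)+100)) 5, ← Real.rpow_mul hqpos.le,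
        show ((5:ℕ):ℝ) * (1/5) = 1 by norm_num, Real.rpow_one] at h2
    calc 8*(M+4)+100 = (1/(8*(M+4)+100))⁻¹ := by rw [one_div, inv_inv]
      _ ≤ K := by
          rw [hKdef]
          exact inv_anti₀ (Real.rpow_pos_of_pos hx _) h1.le
  have hK100 : (100:ℝ) ≤ K := by nlinarith
  have hK4 : (100:ℝ) ≤ K^4 := le_trans hK100 (le_self_pow₀ (by linarith) (by norm_num))
  set δ : ℝ := Real.exp (-(K^4)) with hδdef
  have hδ0 : (0:ℝ) < δ := Real.exp_pos _
  have hδ14 : δ ≤ 1/4 := by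
    have h1 : Real.exp (-(K^4)) ≤ Real.exp (-2) := Real.exp_le_exp.2 (by linarith)
    have h2 : (2:ℝ) ≤ Real.exp 1 := by
      have := Real.exp_one_gt_d9
      linarith
    have h3 : (4:ℝ) ≤ Real.exp 2 := by
      have he : Real.exp 2 = Real.exp 1 * Real.exp 1 := by
        rw [← Real.exp_add]; norm_num
      nlinarith
    have h4 : Real.exp (-2) ≤ 1/4 := by
      rw [Real.exp_neg, show (1:ℝ)/4 = (4:ℝ)⁻¹ by norm_num]
      exact inv_anti₀ (by norm_num) h3
    rw [hδdef]; linarith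
  -- continuity and integrability
  have hbc : ContinuousOn b (Icc 0 1) := b_cont χ b M hχ.continuous hM (by linarith) hb hb0
  have hfc : ContinuousOn (fun s => Real.exp (-s/x) * b s) (Icc 0 1) := by
    apply ContinuousOn.mul _ hbc
    exact (Real.continuous_exp.comp (continuous_id.neg.div_const x)).continuousOn
  have hi1 : IntervalIntegrable (fun s => Real.exp (-s/x) * b s) MeasureTheory.volume 0 δ := by
    apply ContinuousOn.intervalIntegrable
    rw [uIcc_of_le hδ0.le]
    exact hfc.mono (Icc_subset_Icc le_rfl (by linarith))
  have hi2 : IntervalIntegrable (fun s => Real.exp (-s/x) * b s) MeasureTheory.volume δ (1/4) := by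
    apply ContinuousOn.intervalIntegrable
    rw [uIcc_of_le hδ14]
    exact hfc.mono (Icc_subset_Icc hδ0.le (by norm_num))
  have hi3 : IntervalIntegrable (fun s => Real.exp (-s/x) * b s) MeasureTheory.volume (1/4) 1 := by
    apply ContinuousOn.intervalIntegrable
    rw [uIcc_of_le (by norm_num : (1:ℝ)/4 ≤ 1)]
    exact hfc.mono (Icc_subset_Icc (by norm_num) le_rfl)
  have hsplit : (∫ s in (0:ℝ)..1, Real.exp (-s/x) * b s) =
      (∫ s in (0:ℝ)..δ, Real.exp (-s/x) * b s) + (∫ s in δ..(1/4:ℝ), Real.exp (-s/x) * b s)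
      + (∫ s in (1/4:ℝ)..1, Real.exp (-s/x) * b s) := by
    rw [intervalIntegral.integral_add_adjacent_intervals hi1 hi2,
      intervalIntegral.integral_add_adjacent_intervals (hi1.trans hi2) hi3]
  -- bound on [0, δ]
  have hB1 : |∫ s in (0:ℝ)..δ, Real.exp (-s/x) * b s| ≤ δ := by
    have h := intervalIntegral.norm_integral_le_of_norm_le_const
      (C := 1) (f := fun s => Real.exp (-s/x) * b s) (a := (0:ℝ)) (b := δ) ?_
    · rw [Real.norm_eq_abs] at h
      calc |∫ s in (0:ℝ)..δ, Real.exp (-s/x) * b s| ≤ 1 * |δ - 0| := h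
        _ = δ := by rw [abs_of_nonneg (by linarith)]; ring
    · intro s hs
      rw [uIoc_of_le hδ0.le] at hs
      have hs0 : 0 < s := hs.1
      rw [Real.norm_eq_abs, abs_mul, hb s hs0, hχ1 s ⟨hs0.le, by linarith [hs.2]⟩, one_mul,
        abs_mul]
      have e1 : Real.exp (-s/x) ≤ 1 := Real.exp_le_one_iff.2 (by
        apply div_nonpos_of_nonpos_of_nonneg <;> linarith)
      have e2 : Real.exp (-1/s^2) ≤ 1 := Real.exp_le_one_iff.2 (by
        apply div_nonpos_of_nonpos_of_nonneg
        · linarith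
        · positivity)
      have e3 : |Real.sin ((s ^ (4:ℕ))⁻¹)| ≤ 1 := Real.abs_sin_le_one _
      rw [abs_of_pos (Real.exp_pos _), abs_of_pos (Real.exp_pos _)]
      calc Real.exp (-s/x) * (Real.exp (-1/s^2) * |Real.sin ((s ^ (4:ℕ))⁻¹)|)
          ≤ 1 * (1 * 1) := by
            apply mul_le_mul e1 _ (mul_nonneg (Real.exp_nonneg _) (abs_nonneg _)) (by norm_num)
            exact mul_le_mul e2 e3 (abs_nonneg _) (by norm_num)
        _ = 1 := by norm_num
  -- bound on [1/4, 1]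
  have hB3 : |∫ s in (1/4:ℝ)..1, Real.exp (-s/x) * b s| ≤ M * Real.exp (-(K^4)) := by
    have hC0 : (0:ℝ) ≤ M * Real.exp (-(K^4)) := by positivity
    have h := intervalIntegral.norm_integral_le_of_norm_le_const
      (C := M * Real.exp (-(K^4))) (f := fun s => Real.exp (-s/x) * b s) (a := (1/4:ℝ)) (b := 1) ?_
    · rw [Real.norm_eq_abs] at h
      calc |∫ s in (1/4:ℝ)..1, Real.exp (-s/x) * b s| ≤ (M * Real.exp (-(K^4))) * |1 - 1/4| := h
        _ ≤ M * Real.exp (-(K^4)) := by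
            rw [show |(1:ℝ) - 1/4| = 3/4 by norm_num]
            linarith
    · intro s hs
      rw [uIoc_of_le (by norm_num : (1:ℝ)/4 ≤ 1)] at hs
      have hs0 : 0 < s := by linarith [hs.1]
      rw [Real.norm_eq_abs, abs_mul, hb s hs0, abs_mul, abs_mul]
      have hxK' : 1/x = K^5 := by rw [hKdef]; exact hxK
      have hK45 : 4*(K^4) ≤ K^5 := by
        nlinarith [mul_nonneg (pow_nonneg hK0.le 4) (by linarith : (0:ℝ) ≤ K - 4)]
      have e1 : Real.exp (-s/x) ≤ Real.exp (-(K^4)) := by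
        rw [Real.exp_le_exp]
        have hx4 : -s/x ≤ -(1/4)/x := by
          gcongr
          linarith [hs.1]
        have hx5 : -(1/4)/x = -(K^5)/4 := by
          rw [show -(1/4)/x = -((1/x)/4) by ring, hxK']
          ring
        rw [hx5] at hx4
        linarith
      have eχ : |χ s| ≤ M := hM s ⟨by linarith [hs.1], hs.2⟩
      have e2 : Real.exp (-1/s^2) ≤ 1 := Real.exp_le_one_iff.2 (by
        apply div_nonpos_of_nonpos_of_nonneg
        · linarith
        · positivity)
      have e3 : |Real.sin ((s ^ (4:ℕ))⁻¹)| ≤ 1 := Real.abs_sin_le_one _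
      rw [abs_of_pos (Real.exp_pos _), abs_of_pos (Real.exp_pos _)]
      calc Real.exp (-s/x) * (|χ s| * Real.exp (-1/s^2) * |Real.sin ((s ^ (4:ℕ))⁻¹)|)
          ≤ Real.exp (-(K^4)) * (M * 1 * 1) := by
            apply mul_le_mul e1 _ _ (Real.exp_nonneg _)
            · apply mul_le_mul (mul_le_mul eχ e2 (Real.exp_nonneg _) (by linarith)) e3
                (abs_nonneg _) (by nlinarith)
            · positivity
        _ = M * Real.exp (-(K^4)) := by ring
  -- middle piece
  have hxK' : 1/x = K^5 := by rw [hKdef]; exact hxK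
  have hA' : x ^ (-(4:ℝ)/5) = K^4 := by rw [hKdef]; exact hA
  have hB2 : |∫ s in δ..(1/4:ℝ), Real.exp (-s/x) * b s| ≤
      Real.exp (-(K^4)/2) * K^4 + Real.exp (-(K^4)) + Real.exp (-(K^4)) := by
    have heq : (∫ s in δ..(1/4:ℝ), Real.exp (-s/x) * b s)
        = ∫ s in δ..(1/4:ℝ), (Fc x s).im := by
      apply intervalIntegral.integral_congr
      intro s hs
      rw [uIcc_of_le hδ14] at hs
      have hs0 : 0 < s := lt_of_lt_of_le hδ0 hs.1
      show Real.exp (-s/x) * b s = (Fc x s).im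
      rw [hb s hs0, hχ1 s ⟨hs0.le, hs.2⟩, one_mul]
      unfold Fc
      have hz : (-(↑s/(x:ℂ)) - ((s:ℂ))⁻¹^2 + Complex.I * ((s:ℂ))⁻¹^4)
          = ((-(s/x) - s⁻¹^2 : ℝ) : ℂ) + ((s⁻¹^4 : ℝ) : ℂ) * Complex.I := by
        push_cast
        ring
      rw [hz, Complex.exp_im]
      simp only [Complex.add_re, Complex.ofReal_re, Complex.mul_re, Complex.ofReal_im,
        Complex.I_re, Complex.I_im, Complex.add_im, Complex.mul_im,
        mul_zero, mul_one, zero_mul, sub_zero, add_zero, zero_add]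
      rw [show -(s/x) - s⁻¹^2 = (-(s/x)) + (-(s⁻¹^2)) by ring, Real.exp_add]
      rw [show s⁻¹^2 = (s^2)⁻¹ by rw [inv_pow], show s⁻¹^4 = (s^4)⁻¹ by rw [inv_pow]]
      rw [show -(s/x) = -s/x by ring, show -((s^2)⁻¹) = -1/s^2 by ring]
      ring
    rw [heq]
    have hFi : IntervalIntegrable (Fc x) MeasureTheory.volume δ (1/4) := by
      apply ContinuousOn.intervalIntegrable
      rw [uIcc_of_le hδ14]
      apply (Fc_cont x).mono
      intro s hs
      exact lt_of_lt_of_le hδ0 hs.1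
    have him : (∫ s in δ..(1/4:ℝ), (Fc x s).im) = (∫ s in δ..(1/4:ℝ), Fc x s).im := by
      have h := Complex.imCLM.intervalIntegral_comp_comm hFi
      simpa using h
    rw [him]
    calc |(∫ s in δ..(1/4:ℝ), Fc x s).im| ≤ ‖∫ s in δ..(1/4:ℝ), Fc x s‖ := by
          exact Complex.abs_im_le_norm _
      _ ≤ Real.exp (-(K^4)/2) * K^4 + Real.exp (-(K^4)) + Real.exp (-(K^4)) := by
          have hkey := key x K hx hK100 hxK'
          rw [hδdef]
          exact hkey
  -- combine everything
  rw [hsplit, hA']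
  have hfin := final_ineq (K^4) M hM1 (by nlinarith [hKbig, le_self_pow₀ (show (1:ℝ) ≤ K by linarith) (show 4 ≠ 0 by norm_num)]) hK4
  calc |(∫ s in (0:ℝ)..δ, Real.exp (-s/x) * b s) + (∫ s in δ..(1/4:ℝ), Real.exp (-s/x) * b s)
      + (∫ s in (1/4:ℝ)..1, Real.exp (-s/x) * b s)|
      ≤ |∫ s in (0:ℝ)..δ, Real.exp (-s/x) * b s| + |∫ s in δ..(1/4:ℝ), Real.exp (-s/x) * b s|
        + |∫ s in (1/4:ℝ)..1, Real.exp (-s/x) * b s| := abs_add_three _ _ _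
    _ ≤ δ + (Real.exp (-(K^4)/2) * K^4 + Real.exp (-(K^4)) + Real.exp (-(K^4)))
        + M * Real.exp (-(K^4)) := by linarith
    _ = Real.exp (-(K^4)/2) * K^4 + (M+3) * Real.exp (-(K^4)) := by
        rw [hδdef]; ring
    _ ≤ Real.exp (-(1/8) * K^4) := hfin
end

section
/- There exists C ≥ 1 and c > 0 such that M(x) := ∫₀¹ e^{-s/x} b(s)² ds ≥ c·exp(-C x^{-2/3}) for all sufficiently small x > 0. -/
open Real Set intervalIntegral

set_option maxHeartbeats 1000000

/-- There exist C ≥ 1 and c > 0 such that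
M(x) = ∫₀¹ e^{-s/x} b(s)² ds ≥ c exp(-C x^{-2/3}) for all sufficiently small x > 0. -/
theorem stmt_3 (χ b : ℝ → ℝ)
    (hχ : ContDiff ℝ (⊤ : ℕ∞) χ)
    (hχ1 : ∀ s ∈ Icc (0:ℝ) (1/4), χ s = 1)
    (hχ0 : ∀ s : ℝ, 1/3 ≤ s → χ s = 0)
    (hb : ∀ s : ℝ, 0 < s → b s = χ s * Real.exp (-1 / s ^ 2) * Real.sin (s ^ (4:ℕ))⁻¹)
    (hb0 : b 0 = 0) :
    ∃ C : ℝ, 1 ≤ C ∧ ∃ c > (0:ℝ), ∃ x₀ > (0:ℝ), ∀ x : ℝ, 0 < x → x < x₀ →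
      c * Real.exp (-C * x ^ (-(2:ℝ)/3)) ≤ ∫ s in (0:ℝ)..1, Real.exp (-s / x) * (b s) ^ 2 := by
  refine ⟨6, by norm_num, 1, one_pos, (1/10:ℝ)^(15:ℕ), by positivity, ?_⟩
  intro x hx hx0
  have hx1 : x < 1 := lt_trans hx0 (by norm_num)
  set u : ℝ := x ^ (-(2:ℝ)/3) with hu_def
  have hu0 : 0 < u := Real.rpow_pos_of_pos hx _
  have hxp : (0:ℝ) < x ^ ((2:ℝ)/3) := Real.rpow_pos_of_pos hx _
  have hu_inv : u = (x ^ ((2:ℝ)/3))⁻¹ := by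
    rw [hu_def, show (-(2:ℝ)/3) = -((2:ℝ)/3) by norm_num, Real.rpow_neg hx.le]
  have hxs : x ^ ((2:ℝ)/3) ≤ (1/10:ℝ)^(10:ℕ) := by
    calc x ^ ((2:ℝ)/3) ≤ ((1/10:ℝ)^(15:ℕ)) ^ ((2:ℝ)/3) :=
          Real.rpow_le_rpow hx.le hx0.le (by norm_num)
      _ = (1/10:ℝ)^(10:ℕ) := by
          rw [← Real.rpow_natCast (1/10:ℝ) 15, ← Real.rpow_mul (by norm_num),
            ← Real.rpow_natCast (1/10:ℝ) 10]
          norm_num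
  have hu_big : (10:ℝ)^(10:ℕ) ≤ u := by
    rw [hu_inv]
    calc (10:ℝ)^(10:ℕ) = ((1/10:ℝ)^(10:ℕ))⁻¹ := by norm_num
      _ ≤ (x ^ ((2:ℝ)/3))⁻¹ := by
          apply inv_anti₀ hxp hxs
  have hu100 : (100:ℝ) ≤ u := le_trans (by norm_num) hu_big
  have hxu : x * u = x ^ ((1:ℝ)/3) := by
    rw [hu_def, show ((1:ℝ)/3) = 1 + (-(2:ℝ)/3) by norm_num, Real.rpow_add hx, Real.rpow_one]
  have hxu0 : 0 < x * u := by positivity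
  have hxu_small : x * u ≤ (1/10:ℝ)^(5:ℕ) := by
    rw [hxu]
    calc x ^ ((1:ℝ)/3) ≤ ((1/10:ℝ)^(15:ℕ)) ^ ((1:ℝ)/3) :=
          Real.rpow_le_rpow hx.le hx0.le (by norm_num)
      _ = (1/10:ℝ)^(5:ℕ) := by
          rw [← Real.rpow_natCast (1/10:ℝ) 15, ← Real.rpow_mul (by norm_num),
            ← Real.rpow_natCast (1/10:ℝ) 5]
          norm_num
  -- the translation amount
  set n : ℕ := ⌈u^2/(2*π)⌉₊ with hn_def
  set T : ℝ := 2*π*n with hT_def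
  have hπ := Real.pi_pos
  have hπ4 := Real.pi_le_four
  have hT0 : 0 ≤ T := by positivity
  have hT1 : u^2 ≤ T := by
    have h := Nat.le_ceil (u^2/(2*π))
    rw [hT_def]
    rw [div_le_iff₀ (by positivity)] at h
    linarith [h]
  have hT2 : T ≤ u^2 + 2*π := by
    have h := Nat.ceil_lt_add_one (show (0:ℝ) ≤ u^2/(2*π) by positivity)
    rw [hT_def]
    have h2 : (n:ℝ) ≤ u^2/(2*π) + 1 := le_of_lt h
    have h4 : 2*π*(n:ℝ) ≤ 2*π*(u^2/(2*π)+1) := by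
      apply mul_le_mul_of_nonneg_left h2 (by positivity)
    have h5 : 2*π*(u^2/(2*π)+1) = u^2 + 2*π := by field_simp
    linarith [h4, h5]
  set c₁ : ℝ := T + π/2 with hc₁_def
  set c₂ : ℝ := T + π/4 with hc₂_def
  have hc₂0 : 0 < c₂ := by positivity
  have hc₁0 : 0 < c₁ := by positivity
  have hc₂₁ : c₂ ≤ c₁ := by rw [hc₁_def, hc₂_def]; linarith
  have hc₂u : u^2 ≤ c₂ := by rw [hc₂_def]; linarith
  have hu1' : (1:ℝ) ≤ u := by linarith
  have huu : (100:ℝ) ≤ u^2 := by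
    have h := mul_le_mul hu100 hu1' (by norm_num) (by linarith)
    calc (100:ℝ) = 100*1 := by ring
      _ ≤ u*u := h
      _ = u^2 := by ring
  have hc₁4u : c₁ ≤ 4*u^2 := by rw [hc₁_def]; linarith
  set a₁ : ℝ := (c₁ ^ ((1:ℝ)/4))⁻¹ with ha₁_def
  set a₂ : ℝ := (c₂ ^ ((1:ℝ)/4))⁻¹ with ha₂_def
  have ha₁0 : 0 < a₁ := by rw [ha₁_def]; positivity
  have ha₂0 : 0 < a₂ := by rw [ha₂_def]; positivity
  have hq₁ : (c₁ ^ ((1:ℝ)/4)) ^ (4:ℕ) = c₁ := by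
    rw [← Real.rpow_natCast (c₁ ^ ((1:ℝ)/4)) 4, ← Real.rpow_mul hc₁0.le]; norm_num
  have hq₂ : (c₂ ^ ((1:ℝ)/4)) ^ (4:ℕ) = c₂ := by
    rw [← Real.rpow_natCast (c₂ ^ ((1:ℝ)/4)) 4, ← Real.rpow_mul hc₂0.le]; norm_num
  have ha₁4 : a₁ ^ (4:ℕ) = c₁⁻¹ := by rw [ha₁_def, inv_pow, hq₁]
  have ha₂4 : a₂ ^ (4:ℕ) = c₂⁻¹ := by rw [ha₂_def, inv_pow, hq₂]
  have ha₁₂ : a₁ ≤ a₂ := by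
    rw [ha₁_def, ha₂_def]
    exact inv_anti₀ (by positivity) (Real.rpow_le_rpow hc₂0.le hc₂₁ (by norm_num))
  have ha₂xu : a₂ ≤ x * u := by
    have hxinv : (x*u)⁻¹ = (u^2) ^ ((1:ℝ)/4) := by
      have hu2 : u^2 = x ^ (-(4:ℝ)/3) := by
        rw [hu_def, ← Real.rpow_natCast (x ^ (-(2:ℝ)/3)) 2, ← Real.rpow_mul hx.le]
        norm_num
      rw [hu2, ← Real.rpow_mul hx.le, hxu]
      rw [show (-(4:ℝ)/3 * (1/4)) = -((1:ℝ)/3) by norm_num, Real.rpow_neg hx.le]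
    have h1 : (x*u)⁻¹ ≤ c₂ ^ ((1:ℝ)/4) := by
      rw [hxinv]
      exact Real.rpow_le_rpow (by positivity) hc₂u (by norm_num)
    rw [ha₂_def]
    calc (c₂ ^ ((1:ℝ)/4))⁻¹ ≤ ((x*u)⁻¹)⁻¹ := inv_anti₀ (by positivity) h1
      _ = x * u := inv_inv _
  have ha₂quarter : a₂ ≤ 1/4 := le_trans ha₂xu (by norm_num at hxu_small ⊢; linarith)
  have ha₂1 : a₂ ≤ 1 := le_trans ha₂quarter (by norm_num)
  have ha₁inv2 : a₁⁻¹ ^ (2:ℕ) ≤ 2*u := by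
    rw [ha₁_def, inv_inv]
    calc (c₁ ^ ((1:ℝ)/4)) ^ (2:ℕ) = c₁ ^ ((1:ℝ)/2) := by
          rw [← Real.rpow_natCast (c₁ ^ ((1:ℝ)/4)) 2, ← Real.rpow_mul hc₁0.le]; norm_num
      _ ≤ ((2*u)^(2:ℕ)) ^ ((1:ℝ)/2) := by
          apply Real.rpow_le_rpow hc₁0.le _ (by norm_num)
          calc c₁ ≤ 4*u^2 := hc₁4u
            _ = (2*u)^(2:ℕ) := by ring
      _ = 2*u := by
          rw [← Real.rpow_natCast (2*u) 2, ← Real.rpow_mul (by positivity)]; norm_num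
  -- replace b by the explicit formula
  set G : ℝ → ℝ := fun s => Real.exp (-s/x) *
    (χ s * Real.exp (-1 / s ^ 2) * Real.sin (s ^ (4:ℕ))⁻¹)^2 with hG_def
  have hGb : EqOn (fun s => Real.exp (-s / x) * (b s) ^ 2) G (uIcc (0:ℝ) 1) := by
    intro s hs
    rw [uIcc_of_le zero_le_one] at hs
    rcases eq_or_lt_of_le hs.1 with h | h
    · simp only [hG_def, ← h, hb0]
      norm_num
    · simp only [hG_def, hb s h]
  rw [intervalIntegral.integral_congr hGb]
  -- measurability & integrability on [0,1]
  have hmeas : Measurable G := by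
    apply Measurable.mul
    · exact (Real.continuous_exp.comp ((continuous_id.neg).div_const x)).measurable
    · apply Measurable.pow_const
      apply Measurable.mul
      apply Measurable.mul
      · exact hχ.continuous.measurable
      · exact Real.measurable_exp.comp (measurable_const.div ((measurable_id.pow_const 2)))
      · exact Real.measurable_sin.comp ((measurable_id.pow_const 4).inv)
  have hG_nonneg : ∀ s, 0 ≤ G s := by
    intro s; simp only [hG_def]; positivity
  have hint01 : IntervalIntegrable G MeasureTheory.volume 0 1 := by
    rw [intervalIntegrable_iff_integrableOn_Ioc_of_le zero_le_one]
    apply MeasureTheory.Integrable.mono ((hχ.continuous.pow 2).integrableOn_Ioc)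
      hmeas.aestronglyMeasurable.restrict
    refine (MeasureTheory.ae_restrict_iff' measurableSet_Ioc).mpr (MeasureTheory.ae_of_all _ ?_)
    intro s hs
    have hs0 : 0 < s := hs.1
    have hA1 : Real.exp (-s/x) ≤ 1 := by
      rw [Real.exp_le_one_iff]
      rw [neg_div]
      simp only [neg_nonpos]
      positivity
    have hE1 : Real.exp (-1/s^2) ≤ 1 := by
      rw [Real.exp_le_one_iff, neg_div]
      simp only [neg_nonpos]
      positivity
    have hS : (Real.sin ((s ^ (4:ℕ))⁻¹))^2 ≤ 1 := Real.sin_sq_le_one _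
    rw [Real.norm_eq_abs, Real.norm_eq_abs, abs_of_nonneg (hG_nonneg s),
      abs_of_nonneg (sq_nonneg _)]
    simp only [hG_def]
    have hA0 : 0 < Real.exp (-s/x) := Real.exp_pos _
    have hE0 : 0 < Real.exp (-1/s^2) := Real.exp_pos _
    have key : (χ s * Real.exp (-1 / s ^ 2) * Real.sin (s ^ (4:ℕ))⁻¹)^2 ≤ χ s ^ 2 := by
      have expand : (χ s * Real.exp (-1 / s ^ 2) * Real.sin (s ^ (4:ℕ))⁻¹)^2
          = χ s ^2 * (Real.exp (-1/s^2))^2 * (Real.sin ((s ^ (4:ℕ))⁻¹))^2 := by ring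
      rw [expand]
      calc χ s ^2 * (Real.exp (-1/s^2))^2 * (Real.sin ((s ^ (4:ℕ))⁻¹))^2
          ≤ χ s ^2 * 1 * 1 := by
            apply mul_le_mul (mul_le_mul le_rfl (pow_le_one₀ hE0.le hE1) (by positivity) (sq_nonneg _))
              hS (sq_nonneg _) (by positivity)
        _ = χ s ^2 := by ring
    calc Real.exp (-s/x) * (χ s * Real.exp (-1 / s ^ 2) * Real.sin (s ^ (4:ℕ))⁻¹)^2
        ≤ 1 * (χ s ^2) := mul_le_mul hA1 key (sq_nonneg _) zero_le_one
      _ = χ s ^2 := one_mul _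
  -- integrability on [a₁,a₂]
  have hcontsub : ContinuousOn G (uIcc a₁ a₂) := by
    rw [uIcc_of_le ha₁₂]
    have hne : ∀ s ∈ Icc a₁ a₂, s ≠ 0 := fun s hs => ne_of_gt (lt_of_lt_of_le ha₁0 hs.1)
    apply ContinuousOn.mul
    · exact (Real.continuous_exp.comp ((continuous_id.neg).div_const x)).continuousOn
    · apply ContinuousOn.pow
      apply ContinuousOn.mul
      apply ContinuousOn.mul
      · exact hχ.continuous.continuousOn
      · apply Real.continuous_exp.comp_continuousOn
        exact ContinuousOn.div continuousOn_const (continuous_pow 2).continuousOn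
          (fun s hs => pow_ne_zero 2 (hne s hs))
      · apply Real.continuous_sin.comp_continuousOn
        exact ContinuousOn.inv₀ (continuous_pow 4).continuousOn
          (fun s hs => pow_ne_zero 4 (hne s hs))
  have hintsub : IntervalIntegrable G MeasureTheory.volume a₁ a₂ := hcontsub.intervalIntegrable
  -- pointwise lower bound on [a₁, a₂]
  have hlow : ∀ s ∈ Icc a₁ a₂, Real.exp (-u) * Real.exp (-4*u) * (1/4) ≤ G s := by
    intro s hs
    have hs0 : 0 < s := lt_of_lt_of_le ha₁0 hs.1
    have hχs : χ s = 1 := hχ1 s ⟨hs0.le, le_trans hs.2 ha₂quarter⟩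
    have hs41 : a₁^(4:ℕ) ≤ s^(4:ℕ) := pow_le_pow_left₀ ha₁0.le hs.1 4
    have hs42 : s^(4:ℕ) ≤ a₂^(4:ℕ) := pow_le_pow_left₀ hs0.le hs.2 4
    set v : ℝ := (s ^ (4:ℕ))⁻¹ with hv_def
    have hv1 : c₂ ≤ v := by
      have h : (a₂^(4:ℕ))⁻¹ ≤ (s^(4:ℕ))⁻¹ := inv_anti₀ (pow_pos hs0 4) hs42
      rw [ha₂4, inv_inv] at h
      exact h
    have hv2 : v ≤ c₁ := by
      have h : (s^(4:ℕ))⁻¹ ≤ (a₁^(4:ℕ))⁻¹ := inv_anti₀ (pow_pos ha₁0 4) hs41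
      rw [ha₁4, inv_inv] at h
      exact h
    have hsinv : 1/2 ≤ Real.sin v := by
      have hsv : Real.sin v = Real.sin (v - T) := by
        nth_rewrite 1 [show v = (v - T) + n*(2*π) by rw [hT_def]; ring]
        rw [Real.sin_add_nat_mul_two_pi]
      rw [hsv]
      have h1 : π/4 ≤ v - T := by rw [hc₂_def] at hv1; linarith
      have h2 : v - T ≤ π/2 := by rw [hc₁_def] at hv2; linarith
      have hm := Real.strictMonoOn_sin.monotoneOn (a := π/4) (b := v - T)
        ⟨by linarith, by linarith⟩ ⟨by linarith, h2⟩ h1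
      rw [Real.sin_pi_div_four] at hm
      have hs2 : (1:ℝ) ≤ Real.sqrt 2 := by
        rw [show (1:ℝ) = Real.sqrt 1 by simp]
        exact Real.sqrt_le_sqrt (by norm_num)
      linarith [hm, hs2]
    have hsin2 : 1/4 ≤ (Real.sin v)^2 := by
      have := pow_le_pow_left₀ (by norm_num : (0:ℝ) ≤ 1/2) hsinv 2
      calc (1:ℝ)/4 = (1/2:ℝ)^2 := by norm_num
        _ ≤ (Real.sin v)^2 := this
    have hA : Real.exp (-u) ≤ Real.exp (-s/x) := by
      apply Real.exp_le_exp.mpr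
      rw [neg_div, neg_le_neg_iff, div_le_iff₀ hx]
      calc s ≤ a₂ := hs.2
        _ ≤ x*u := ha₂xu
        _ = u*x := mul_comm _ _
    have hE2 : Real.exp (-4*u) ≤ (Real.exp (-1/s^2))^2 := by
      have heq : (Real.exp (-1/s^2))^2 = Real.exp (-2/s^2) := by
        rw [sq, ← Real.exp_add]; ring_nf
      rw [heq]
      apply Real.exp_le_exp.mpr
      have h1 : 1/s^2 ≤ 1/a₁^2 := by
        apply div_le_div_of_nonneg_left one_pos.le (by positivity)
        · exact pow_le_pow_left₀ ha₁0.le hs.1 2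
      have h2 : 1/a₁^2 = a₁⁻¹^2 := (one_div _).trans (inv_pow a₁ 2).symm
      have h3 : 1/s^2 ≤ 2*u := by rw [h2] at h1; linarith [ha₁inv2]
      have h4 := mul_le_mul_of_nonpos_left h3 (show (-2:ℝ) ≤ 0 by norm_num)
      calc -4*u = -2*(2*u) := by ring
        _ ≤ -2*(1/s^2) := h4
        _ = -2/s^2 := by ring
    have hGs : G s = Real.exp (-s/x) * (Real.exp (-1/s^2))^2 * (Real.sin v)^2 := by
      rw [hG_def]
      simp only [hχs, hv_def]
      ring
    rw [hGs]
    have h1 : Real.exp (-u) * Real.exp (-4*u) ≤ Real.exp (-s/x) * (Real.exp (-1/s^2))^2 :=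
      mul_le_mul hA hE2 (Real.exp_pos _).le (Real.exp_pos _).le
    calc Real.exp (-u) * Real.exp (-4*u) * (1/4)
        ≤ (Real.exp (-s/x) * (Real.exp (-1/s^2))^2) * (1/4) := by
          apply mul_le_mul_of_nonneg_right h1 (by norm_num)
      _ ≤ (Real.exp (-s/x) * (Real.exp (-1/s^2))^2) * (Real.sin v)^2 := by
          apply mul_le_mul_of_nonneg_left hsin2 (by positivity)
  -- the interval version of the lower bound
  have step1 : (a₂ - a₁) * (Real.exp (-u) * Real.exp (-4*u) * (1/4))
      ≤ ∫ s in a₁..a₂, G s := by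
    have h := intervalIntegral.integral_mono_on ha₁₂
      (_root_.intervalIntegrable_const (c := Real.exp (-u) * Real.exp (-4*u) * (1/4))) hintsub hlow
    rwa [intervalIntegral.integral_const, smul_eq_mul] at h
  have step2 : (∫ s in a₁..a₂, G s) ≤ ∫ s in (0:ℝ)..1, G s :=
    intervalIntegral.integral_mono_interval ha₁0.le ha₁₂ ha₂1
      (MeasureTheory.ae_of_all _ hG_nonneg) hint01
  -- the gap lower bound
  have hgap : (1:ℝ) ≤ (a₂ - a₁) * (128*x^3*u^7) := by
    set D : ℝ := a₂^3 + a₂^2*a₁ + a₂*a₁^2 + a₁^3 with hD_def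
    have hD0 : 0 < D := by rw [hD_def]; positivity
    have key : (a₂ - a₁) * D = c₂⁻¹ - c₁⁻¹ := by
      have h : (a₂ - a₁) * D = a₂^(4:ℕ) - a₁^(4:ℕ) := by rw [hD_def]; ring
      rw [h, ha₂4, ha₁4]
    have hsub : c₂⁻¹ - c₁⁻¹ = (π/4) * (c₂⁻¹ * c₁⁻¹) := by
      rw [hc₁_def, hc₂_def]
      field_simp
      ring
    have hinv1 : (4*u^2)⁻¹ ≤ c₁⁻¹ := inv_anti₀ hc₁0 hc₁4u
    have hinv2 : (4*u^2)⁻¹ ≤ c₂⁻¹ := inv_anti₀ hc₂0 (le_trans hc₂₁ hc₁4u)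
    have h5 : 1/(32*u^4) ≤ (a₂ - a₁) * D := by
      rw [key, hsub]
      have h6 : (4*u^2)⁻¹ * (4*u^2)⁻¹ ≤ c₂⁻¹ * c₁⁻¹ :=
        mul_le_mul hinv2 hinv1 (by positivity) (by positivity)
      calc 1/(32*u^4) ≤ (π/4) * ((4*u^2)⁻¹ * (4*u^2)⁻¹) := by
            rw [show (4*u^2)⁻¹ * (4*u^2)⁻¹ = 1/(16*u^4) by field_simp; ring]
            have hstep : (3:ℝ)/4 * (1/(16*u^4)) ≤ (π/4) * (1/(16*u^4)) := by
              apply mul_le_mul_of_nonneg_right _ (by positivity)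
              linarith [Real.pi_gt_three]
            have hstep2 : 1/(32*u^4) ≤ (3:ℝ)/4 * (1/(16*u^4)) := by
              rw [show (3:ℝ)/4 * (1/(16*u^4)) = 3/(64*u^4) by ring,
                div_le_div_iff₀ (by positivity) (by positivity)]
              linarith [pow_pos hu0 4]
            linarith
        _ ≤ (π/4) * (c₂⁻¹ * c₁⁻¹) := by
            apply mul_le_mul_of_nonneg_left h6 (by positivity)
    have hD_le : D ≤ 4*(x*u)^3 := by
      have t1 : a₂^3 ≤ (x*u)^3 := pow_le_pow_left₀ ha₂0.le ha₂xu 3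
      have t2 : a₂^2*a₁ ≤ a₂^3 := by
        calc a₂^2*a₁ ≤ a₂^2*a₂ := mul_le_mul_of_nonneg_left ha₁₂ (sq_nonneg a₂)
          _ = a₂^3 := by ring
      have t3 : a₂*a₁^2 ≤ a₂^3 := by
        calc a₂*a₁^2 ≤ a₂*a₂^2 :=
              mul_le_mul_of_nonneg_left (pow_le_pow_left₀ ha₁0.le ha₁₂ 2) ha₂0.le
          _ = a₂^3 := by ring
      have t4 : a₁^3 ≤ a₂^3 := pow_le_pow_left₀ ha₁0.le ha₁₂ 3
      rw [hD_def]; linarith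
    have h7 : 1/(32*u^4) ≤ (a₂ - a₁) * (4*(x*u)^3) := by
      calc 1/(32*u^4) ≤ (a₂ - a₁) * D := h5
        _ ≤ (a₂ - a₁) * (4*(x*u)^3) :=
            mul_le_mul_of_nonneg_left hD_le (by linarith [ha₁₂])
    calc (1:ℝ) = (1/(32*u^4)) * (32*u^4) := by field_simp
      _ ≤ ((a₂ - a₁) * (4*(x*u)^3)) * (32*u^4) :=
          mul_le_mul_of_nonneg_right h7 (by positivity)
      _ = (a₂ - a₁) * (128*x^3*u^7) := by ring
  -- exp(u) beats the polynomial
  have hexpu : 512*x^3*u^7 ≤ Real.exp u := by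
    have hx3 : x^3 ≤ 1 := pow_le_one₀ hx.le hx1.le
    have h1 : 512*x^3*u^7 ≤ 512*u^7 := by
      calc 512*x^3*u^7 = (512*u^7)*x^3 := by ring
        _ ≤ (512*u^7)*1 := mul_le_mul_of_nonneg_left hx3 (by positivity)
        _ = 512*u^7 := by ring
    have h2 : u/8 ≤ Real.exp (u/8) := by linarith [Real.add_one_le_exp (u/8)]
    have h3 : (u/8)^(8:ℕ) ≤ (Real.exp (u/8))^(8:ℕ) := pow_le_pow_left₀ (by positivity) h2 8
    have h4 : Real.exp u = (Real.exp (u/8))^(8:ℕ) := by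
      rw [← Real.exp_nat_mul]; congr 1; push_cast; ring
    have h5 : 512*u^7 ≤ (u/8)^(8:ℕ) := by
      have hu7 : (0:ℝ) ≤ u^7 := by positivity
      have heq : (u/8)^(8:ℕ) = u*u^7/16777216 := by ring
      have hbig : (8589934592:ℝ) * u^7 ≤ u * u^7 :=
        mul_le_mul_of_nonneg_right (le_trans (by norm_num) hu_big) hu7
      rw [heq]
      linarith
    rw [h4]; linarith
  -- final chain
  have hK : (0:ℝ) < 512*x^3*u^7 := by positivity
  have final1 : Real.exp (-6*u) ≤ Real.exp (-5*u) / (512*x^3*u^7) := by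
    rw [le_div_iff₀ hK]
    calc Real.exp (-6*u) * (512*x^3*u^7) ≤ Real.exp (-6*u) * Real.exp u :=
          mul_le_mul_of_nonneg_left hexpu (Real.exp_pos _).le
      _ = Real.exp (-5*u) := by rw [← Real.exp_add]; ring_nf
  have final2 : Real.exp (-5*u) / (512*x^3*u^7)
      ≤ (a₂ - a₁) * (Real.exp (-u) * Real.exp (-4*u) * (1/4)) := by
    have e5 : Real.exp (-u) * Real.exp (-4*u) = Real.exp (-5*u) := by
      rw [← Real.exp_add]; ring_nf
    rw [div_le_iff₀ hK]
    calc Real.exp (-5*u) = Real.exp (-5*u) * 1 := (mul_one _).symm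
      _ ≤ Real.exp (-5*u) * ((a₂ - a₁) * (128*x^3*u^7)) :=
          mul_le_mul_of_nonneg_left hgap (Real.exp_pos _).le
      _ = (a₂ - a₁) * (Real.exp (-u) * Real.exp (-4*u) * (1/4)) * (512*x^3*u^7) := by
          rw [e5]; ring
  calc 1 * Real.exp (-6*u) = Real.exp (-6*u) := one_mul _
    _ ≤ Real.exp (-5*u) / (512*x^3*u^7) := final1
    _ ≤ (a₂ - a₁) * (Real.exp (-u) * Real.exp (-4*u) * (1/4)) := final2
    _ ≤ ∫ s in a₁..a₂, G s := step1
    _ ≤ ∫ s in (0:ℝ)..1, G s := step2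
end

section
/- Let a ∈ C([0,1]) satisfy |n ∫₀¹ e^{-nt} a(t) dt| = O(e^{-n}) as n → ∞ through the natural numbers. Then a ≡ 0. -/
/-!
Write `I n = ∫₀¹ e^{-nt} a(t) dt`, so that `|I n| ≤ K e^{-n}` for all `n`. For a polynomial
`p = ∑ cₖ Xᵏ` and `q ∈ ℕ`, the integral `∫₀¹ p(e^{-qt}) a(t) dt = ∑ cₖ I(qk)` is bounded by
`K ∑ |cₖ| e^{-qk}`, and this weighted `ℓ¹` norm of the coefficients is submultiplicative.

Suppose `a(t₀) > 0` with `t₀ < 1`. Choose `q` with `q (1 - t₀) ≥ 2`, put `σ = e^{-qt₀}` and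
`P(x) = 1 - (x - σ)²`. Since `σ ≥ 3 e^{-q}`, the norm of `P` is
`θ = 1 - σ² + 2σe^{-q} + e^{-2q} < 1`, so `∫₀¹ P(e^{-qt})^m a(t) dt = O(θ^m)`. On the other hand
`P(e^{-qt})` takes values in `[0,1]` and equals `1` only at `t₀`, where `a > 0`, so this integral
decays more slowly than any geometric sequence. Hence `a ≤ 0` on `[0,1)`; the same holds for `-a`,
and `a(1) = 0` follows by continuity.
-/

open Real Set intervalIntegral Polynomial Filter Topology

namespace Polynomial

noncomputable def absEval (ρ : ℝ) (p : ℝ[X]) : ℝ :=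
  p.sum fun n c => |c| * ρ ^ n

variable {ρ : ℝ}

theorem absEval_eq_sum_range {p : ℝ[X]} {N : ℕ} (hN : p.natDegree < N) :
    absEval ρ p = ∑ n ∈ Finset.range N, |p.coeff n| * ρ ^ n :=
  p.sum_over_range' (by simp) N hN

theorem absEval_nonneg (hρ : 0 ≤ ρ) (p : ℝ[X]) : 0 ≤ absEval ρ p :=
  Finset.sum_nonneg fun _ _ => by positivity

@[simp] theorem absEval_zero : absEval ρ 0 = 0 := by simp [absEval]

theorem absEval_add_le (hρ : 0 ≤ ρ) (p q : ℝ[X]) :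
    absEval ρ (p + q) ≤ absEval ρ p + absEval ρ q := by
  set N := max p.natDegree q.natDegree + 1
  have hp : p.natDegree < N := by omega
  have hq : q.natDegree < N := by omega
  have hpq : (p + q).natDegree < N := (natDegree_add_le p q).trans_lt (by omega)
  rw [absEval_eq_sum_range hp, absEval_eq_sum_range hq, absEval_eq_sum_range hpq,
    ← Finset.sum_add_distrib]
  gcongr with n
  rw [coeff_add, ← add_mul]
  exact mul_le_mul_of_nonneg_right (abs_add_le _ _) (pow_nonneg hρ n)

@[simp] theorem absEval_neg (p : ℝ[X]) : absEval ρ (-p) = absEval ρ p := by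
  simp [absEval, Polynomial.sum_def]

theorem absEval_sub_le (hρ : 0 ≤ ρ) (p q : ℝ[X]) :
    absEval ρ (p - q) ≤ absEval ρ p + absEval ρ q := by
  simpa [sub_eq_add_neg] using absEval_add_le hρ p (-q)

theorem absEval_monomial_mul (n : ℕ) (c : ℝ) (p : ℝ[X]) :
    absEval ρ (monomial n c * p) = |c| * ρ ^ n * absEval ρ p := by
  have hp : p.natDegree < p.natDegree + 1 := Nat.lt_succ_self _
  have hcp : (monomial n c * p).natDegree < n + (p.natDegree + 1) := by
    rw [← C_mul_X_pow_eq_monomial, mul_assoc]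
    refine (natDegree_C_mul_le _ _).trans_lt ?_
    refine (natDegree_mul_le).trans_lt ?_
    have := natDegree_X_pow_le (R := ℝ) n
    omega
  rw [absEval_eq_sum_range hcp, absEval_eq_sum_range hp, Finset.sum_range_add, Finset.mul_sum]
  have hlow : ∀ k ∈ Finset.range n, |(monomial n c * p).coeff k| * ρ ^ k = 0 := by
    intro k hk
    rw [← C_mul_X_pow_eq_monomial, mul_assoc, coeff_C_mul, coeff_X_pow_mul',
      if_neg (by simpa using hk)]
    simp
  rw [Finset.sum_eq_zero hlow, zero_add]
  refine Finset.sum_congr rfl fun k _ => ?_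
  rw [add_comm n k, coeff_monomial_mul, abs_mul, pow_add]
  ring

theorem absEval_monomial (n : ℕ) (c : ℝ) : absEval ρ (monomial n c) = |c| * ρ ^ n :=
  sum_monomial_index c _ (by simp)

theorem absEval_mul_le (hρ : 0 ≤ ρ) (p q : ℝ[X]) :
    absEval ρ (p * q) ≤ absEval ρ p * absEval ρ q :=
  calc absEval ρ (p * q)
      = absEval ρ (∑ i ∈ p.support, monomial i (p.coeff i) * q) := by
        rw [← Finset.sum_mul, ← as_sum_support]
    _ ≤ ∑ i ∈ p.support, absEval ρ (monomial i (p.coeff i) * q) :=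
        Finset.le_sum_of_subadditive _ absEval_zero.le (absEval_add_le hρ) _ _
    _ = absEval ρ p * absEval ρ q := by
        simp only [absEval_monomial_mul, ← Finset.sum_mul]
        rfl

theorem absEval_pow_le (hρ : 0 ≤ ρ) (p : ℝ[X]) (m : ℕ) :
    absEval ρ (p ^ m) ≤ absEval ρ p ^ m := by
  induction m with
  | zero => simpa using (absEval_monomial (ρ := ρ) 0 1).le
  | succ m ih =>
    rw [pow_succ, pow_succ]
    exact (absEval_mul_le hρ _ _).trans
      (mul_le_mul_of_nonneg_right ih (absEval_nonneg hρ p))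

theorem abs_sum_mul_le_absEval {u : ℕ → ℝ} {K : ℝ} (hu : ∀ n, |u n| ≤ K * ρ ^ n) (p : ℝ[X]) :
    |p.sum fun n c => c * u n| ≤ K * absEval ρ p := by
  rw [absEval, Polynomial.sum_def, Polynomial.sum_def, Finset.mul_sum]
  refine (Finset.abs_sum_le_sum_abs _ _).trans (Finset.sum_le_sum fun n _ => ?_)
  rw [abs_mul]
  nlinarith [abs_nonneg (p.coeff n), hu n]

end Polynomial

noncomputable def peakPoly (σ : ℝ) : ℝ[X] := C (1 - σ ^ 2) + C (2 * σ) * X - X ^ 2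

theorem eval_peakPoly (σ x : ℝ) : (peakPoly σ).eval x = 1 - (x - σ) ^ 2 := by
  simp only [peakPoly, eval_sub, eval_add, eval_mul, eval_pow, eval_C, eval_X]
  ring

theorem absEval_peakPoly_le {σ ρ : ℝ} (hσ₀ : 0 ≤ σ) (hσ₁ : σ ≤ 1) (hρ : 0 ≤ ρ) :
    absEval ρ (peakPoly σ) ≤ 1 - σ ^ 2 + 2 * σ * ρ + ρ ^ 2 :=
  calc absEval ρ (peakPoly σ)
      ≤ absEval ρ (C (1 - σ ^ 2)) + absEval ρ (C (2 * σ) * X) + absEval ρ (X ^ 2) :=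
        (absEval_sub_le hρ _ _).trans (add_le_add_left (absEval_add_le hρ _ _) _)
    _ = 1 - σ ^ 2 + 2 * σ * ρ + ρ ^ 2 := by
        rw [← monomial_zero_left, C_mul_X_eq_monomial, X_pow_eq_monomial, absEval_monomial,
          absEval_monomial, absEval_monomial, abs_of_nonneg (by nlinarith),
          abs_of_nonneg (by positivity)]
        simp

theorem integral_eval_mul_eq_sum {g a : ℝ → ℝ} {u v : ℝ} (hg : ContinuousOn g (uIcc u v))
    (ha : ContinuousOn a (uIcc u v)) (p : ℝ[X]) :
    ∫ t in u..v, p.eval (g t) * a t = p.sum fun n c => c * ∫ t in u..v, g t ^ n * a t := by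
  simp only [eval_eq_sum, Polynomial.sum_def, Finset.sum_mul, mul_assoc]
  rw [intervalIntegral.integral_finsetSum]
  · simp only [integral_const_mul]
  · exact fun n _ => (((hg.pow n).mul ha).intervalIntegrable).const_mul _

theorem abs_integral_eval_exp_mul_le {a : ℝ → ℝ} (ha : ContinuousOn a (Icc 0 1)) {K : ℝ}
    (hK : ∀ n : ℕ, |∫ t in (0:ℝ)..1, exp (-(n : ℝ) * t) * a t| ≤ K * exp (-(n : ℝ)))
    (q : ℕ) (p : ℝ[X]) :
    |∫ t in (0:ℝ)..1, p.eval (exp (-(q : ℝ) * t)) * a t| ≤ K * absEval (exp (-(q : ℝ))) p := by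
  rw [integral_eval_mul_eq_sum (by fun_prop) (by rwa [uIcc_of_le zero_le_one])]
  refine abs_sum_mul_le_absEval (fun n => ?_) p
  simpa [← Real.exp_nat_mul, mul_comm, mul_left_comm, mul_assoc] using hK (q * n)

theorem IsCompact.exists_lt_forall_le_of_forall_lt {X : Type*} [TopologicalSpace X] {s : Set X}
    (hs : IsCompact s) {f : X → ℝ} (hf : ContinuousOn f s) {c : ℝ} (h : ∀ x ∈ s, f x < c) :
    ∃ b < c, ∀ x ∈ s, f x ≤ b := by
  rcases s.eq_empty_or_nonempty with rfl | hne
  · exact ⟨c - 1, by linarith, by simp⟩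
  · obtain ⟨x, hx, hmax⟩ := hs.exists_isMaxOn hne hf
    exact ⟨f x, h x hx, hmax⟩

theorem le_integral_of_le_on_Icc {g : ℝ → ℝ} {u v s w A B : ℝ}
    (hg : IntervalIntegrable g MeasureTheory.volume u v) (hus : u ≤ s) (hsw : s ≤ w) (hwv : w ≤ v)
    (hB : ∀ t ∈ Icc u v, -B ≤ g t) (hA : ∀ t ∈ Icc s w, A ≤ g t) :
    (w - s) * (A + B) - (v - u) * B ≤ ∫ t in u..v, g t := by
  have hgB : IntervalIntegrable (fun t => g t + B) MeasureTheory.volume u v :=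
    hg.add intervalIntegrable_const
  have hsub : uIcc s w ⊆ uIcc u v := by
    rw [uIcc_of_le hsw, uIcc_of_le (hus.trans (hsw.trans hwv))]
    exact Icc_subset_Icc hus hwv
  have hsw_int : (w - s) * (A + B) ≤ ∫ t in s..w, (g t + B) := by
    have := integral_mono_on hsw (intervalIntegrable_const (c := A + B)) (hgB.mono_set hsub)
      fun t ht => by linarith [hA t ht]
    rwa [integral_const, smul_eq_mul] at this
  have hmono : ∫ t in s..w, (g t + B) ≤ ∫ t in u..v, (g t + B) :=
    integral_mono_interval hus hsw hwv ((MeasureTheory.ae_restrict_mem measurableSet_Ioc).mono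
      fun t ht => show 0 ≤ g t + B by linarith [hB t (Ioc_subset_Icc_self ht)]) hgB
  have hsplit : ∫ t in u..v, (g t + B) = (∫ t in u..v, g t) + (v - u) * B := by
    rw [integral_add hg intervalIntegrable_const, integral_const, smul_eq_mul]
  linarith

theorem exists_mul_pow_lt_of_mul_pow_sub_le {θ β γ c D K : ℝ} {x : ℕ → ℝ} (hθ₀ : 0 ≤ θ)
    (hθγ : θ < γ) (hβ₀ : 0 ≤ β) (hβγ : β < γ) (hc : 0 < c)
    (hx : ∀ m : ℕ, c * γ ^ m - D * β ^ m ≤ x m) : ∃ m : ℕ, K * θ ^ m < x m := by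
  have hγ₀ : 0 < γ := hθ₀.trans_lt hθγ
  have htend : Tendsto (fun m : ℕ => K * (θ / γ) ^ m + D * (β / γ) ^ m) atTop (𝓝 0) := by
    simpa using ((tendsto_pow_atTop_nhds_zero_of_lt_one (by positivity)
      ((div_lt_one hγ₀).2 hθγ)).const_mul K).add ((tendsto_pow_atTop_nhds_zero_of_lt_one
      (by positivity) ((div_lt_one hγ₀).2 hβγ)).const_mul D)
  obtain ⟨m, hm⟩ := (htend.eventually (gt_mem_nhds hc)).exists
  refine ⟨m, ?_⟩
  have := mul_lt_mul_of_pos_right hm (pow_pos hγ₀ m)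
  rw [add_mul, mul_assoc K, mul_assoc D, ← mul_pow, ← mul_pow,
    div_mul_cancel₀ _ hγ₀.ne', div_mul_cancel₀ _ hγ₀.ne'] at this
  linarith [hx m]

theorem exists_lt_integral_pow_mul {f a : ℝ → ℝ} {u v t₀ θ : ℝ} (K : ℝ)
    (hf : ContinuousOn f (Icc u v)) (ha : ContinuousOn a (Icc u v)) (ht₀ : t₀ ∈ Ico u v)
    (hf_nonneg : ∀ t ∈ Icc u v, 0 ≤ f t) (hf_lt_one : ∀ t ∈ Icc u v, t ≠ t₀ → f t < 1)
    (hft₀ : f t₀ = 1) (hat₀ : 0 < a t₀) (hθ₀ : 0 ≤ θ) (hθ : θ < 1) :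
    ∃ m : ℕ, K * θ ^ m < ∫ t in u..v, f t ^ m * a t := by
  obtain ⟨M, hM⟩ := isCompact_Icc.exists_bound_of_continuousOn ha
  have hM₀ : 0 ≤ M := (norm_nonneg _).trans (hM t₀ (Ico_subset_Icc_self ht₀))
  obtain ⟨β, hβ₀, hβ₁, hβ⟩ : ∃ β, 0 ≤ β ∧ β < 1 ∧ ∀ t ∈ Icc u v, a t ≤ 0 → f t ≤ β := by
    obtain ⟨b, hb₁, hb⟩ := (isCompact_Icc.of_isClosed_subset
      (ha.preimage_isClosed_of_isClosed isClosed_Icc isClosed_Iic) inter_subset_left)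
      |>.exists_lt_forall_le_of_forall_lt (hf.mono inter_subset_left)
        fun t ht => hf_lt_one t ht.1 fun h => (h ▸ hat₀).not_ge ht.2
    exact ⟨max b 0, le_max_right _ _, max_lt hb₁ one_pos,
      fun t ht hat => (hb t ⟨ht, hat⟩).trans (le_max_left _ _)⟩
  obtain ⟨γ, hγ, hγ₁⟩ := exists_between (max_lt hθ hβ₁)
  obtain ⟨hθγ, hβγ⟩ := max_lt_iff.mp hγ
  have hγ₀ : 0 < γ := hθ₀.trans_lt hθγ
  have hnear : ∀ᶠ t in 𝓝[≥] t₀, t ∈ Icc u v ∧ γ ≤ f t ∧ a t₀ / 2 ≤ a t := by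
    have hmem : Icc u v ∈ 𝓝[≥] t₀ := Icc_mem_nhdsGE_of_mem ⟨ht₀.1, ht₀.2⟩
    have hft : Tendsto f (𝓝[≥] t₀) (𝓝 (f t₀)) :=
      (hf t₀ (Ico_subset_Icc_self ht₀)).mono_of_mem_nhdsWithin hmem
    have hat : Tendsto a (𝓝[≥] t₀) (𝓝 (a t₀)) :=
      (ha t₀ (Ico_subset_Icc_self ht₀)).mono_of_mem_nhdsWithin hmem
    filter_upwards [hmem, hft.eventually (eventually_ge_nhds (hft₀ ▸ hγ₁)),
      hat.eventually (eventually_ge_nhds (half_lt_self hat₀))] with t h₁ h₂ h₃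
    exact ⟨h₁, h₂, h₃⟩
  obtain ⟨w, hw, hsub⟩ := mem_nhdsGE_iff_exists_Icc_subset.mp hnear
  have hwv : w ≤ v := (hsub ⟨hw.le, le_rfl⟩).1.2
  have hlower : ∀ m : ℕ,
      (w - t₀) * (a t₀ / 2) * γ ^ m - (v - u) * M * β ^ m ≤ ∫ t in u..v, f t ^ m * a t := by
    intro m
    have hB : ∀ t ∈ Icc u v, -(M * β ^ m) ≤ f t ^ m * a t := by
      intro t ht
      have hfm₀ := pow_nonneg (hf_nonneg t ht) m
      rcases le_or_gt (a t) 0 with hat | hat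
      · have hfm : f t ^ m ≤ β ^ m := pow_le_pow_left₀ (hf_nonneg t ht) (hβ t ht hat) m
        have haM : -M ≤ a t := neg_le_of_abs_le (hM t ht)
        nlinarith
      · nlinarith [mul_nonneg hfm₀ hat.le, pow_nonneg hβ₀ m]
    have hA : ∀ t ∈ Icc t₀ w, γ ^ m * (a t₀ / 2) ≤ f t ^ m * a t := fun t ht =>
      mul_le_mul (pow_le_pow_left₀ hγ₀.le (hsub ht).2.1 m) (hsub ht).2.2 (by positivity)
        (pow_nonneg (hf_nonneg t (hsub ht).1) m)
    have := le_integral_of_le_on_Icc (g := fun t => f t ^ m * a t)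
      (((hf.pow m).mul ha).intervalIntegrable_of_Icc (ht₀.1.trans ht₀.2.le)) ht₀.1 hw.le hwv hB hA
    nlinarith [mul_nonneg (sub_nonneg.2 hw.le) (by positivity : 0 ≤ M * β ^ m)]
  exact exists_mul_pow_lt_of_mul_pow_sub_le hθ₀ hθγ hβ₀ hβγ
    (mul_pos (sub_pos.2 hw) (half_pos hat₀)) hlower

theorem nonpos_of_abs_integral_exp_mul_le {a : ℝ → ℝ} (ha : ContinuousOn a (Icc 0 1)) {K : ℝ}
    (hK : ∀ n : ℕ, |∫ t in (0:ℝ)..1, exp (-(n : ℝ) * t) * a t| ≤ K * exp (-(n : ℝ)))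
    {t₀ : ℝ} (ht₀ : t₀ ∈ Ico (0:ℝ) 1) : a t₀ ≤ 0 := by
  by_contra! hat₀
  have hK₀ : 0 ≤ K := by simpa using (abs_nonneg _).trans (hK 0)
  obtain ⟨q, hq⟩ := exists_nat_gt (2 / (1 - t₀))
  have hq₂ : 2 ≤ q * (1 - t₀) := ((div_lt_iff₀ (sub_pos.2 ht₀.2)).1 hq).le
  have hq₀ : (0 : ℝ) < q := by nlinarith [ht₀.2]
  set σ := exp (-(q : ℝ) * t₀)
  set ρ := exp (-(q : ℝ))
  have hρ₀ : 0 < ρ := exp_pos _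
  have hσ₀ : 0 < σ := exp_pos _
  have hexp_le_one : ∀ t ∈ Icc (0:ℝ) 1, exp (-(q : ℝ) * t) ≤ 1 := fun t ht =>
    exp_le_one_iff.2 (by nlinarith [ht.1])
  have hσ₁ : σ ≤ 1 := hexp_le_one t₀ (Ico_subset_Icc_self ht₀)
  have hρσ : 3 * ρ ≤ σ := by
    have : σ = ρ * exp (q * (1 - t₀)) := by simp only [σ, ρ, ← exp_add]; ring_nf
    rw [this]
    nlinarith [add_one_le_exp (q * (1 - t₀))]
  set θ := 1 - σ ^ 2 + 2 * σ * ρ + ρ ^ 2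
  have hupper : ∀ m : ℕ,
      ∫ t in (0:ℝ)..1, (1 - (exp (-(q : ℝ) * t) - σ) ^ 2) ^ m * a t ≤ K * θ ^ m := by
    intro m
    have := abs_integral_eval_exp_mul_le ha hK q (peakPoly σ ^ m)
    simp only [eval_pow, eval_peakPoly] at this
    refine (le_abs_self _).trans (this.trans (mul_le_mul_of_nonneg_left ?_ hK₀))
    exact (absEval_pow_le hρ₀.le _ m).trans (pow_le_pow_left₀ (absEval_nonneg hρ₀.le _)
      (absEval_peakPoly_le hσ₀.le hσ₁ hρ₀.le) m)
  obtain ⟨m, hm⟩ := exists_lt_integral_pow_mul (θ := θ) K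
    (f := fun t => 1 - (exp (-(q : ℝ) * t) - σ) ^ 2)
    (by fun_prop) ha ht₀ (fun t ht => by nlinarith [hexp_le_one t ht, exp_pos (-(q : ℝ) * t)])
    (fun t _ hne => by
      have : exp (-(q : ℝ) * t) ≠ σ := fun h => hne (by simpa [hq₀.ne'] using exp_injective h)
      linarith [pow_two_pos_of_ne_zero (sub_ne_zero.2 this)])
    (by simp [σ]) hat₀ (by nlinarith) (by nlinarith)
  exact (hm.trans_le (hupper m)).false

theorem exists_abs_integral_exp_mul_le {a : ℝ → ℝ} (ha : ContinuousOn a (Icc 0 1)) {C : ℝ}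
    (hbound : ∀ n : ℕ, |(n : ℝ) * ∫ t in (0:ℝ)..1, exp (-(n : ℝ) * t) * a t|
      ≤ C * exp (-(n : ℝ))) :
    ∃ K, ∀ n : ℕ, |∫ t in (0:ℝ)..1, exp (-(n : ℝ) * t) * a t| ≤ K * exp (-(n : ℝ)) := by
  obtain ⟨M, hM⟩ := isCompact_Icc.exists_bound_of_continuousOn ha
  refine ⟨max C M, fun n => ?_⟩
  rcases Nat.eq_zero_or_pos n with rfl | hn
  · have := norm_integral_le_of_norm_le_const (a := 0) (b := 1) fun t ht =>
      hM t (Ioc_subset_Icc_self (by simpa using ht))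
    simp only [sub_zero, abs_one, mul_one] at this
    simpa using this.trans (le_max_right C M)
  · calc |∫ t in (0:ℝ)..1, exp (-(n : ℝ) * t) * a t|
        ≤ |(n : ℝ) * ∫ t in (0:ℝ)..1, exp (-(n : ℝ) * t) * a t| := by
          rw [abs_mul, Nat.abs_cast]
          exact le_mul_of_one_le_left (abs_nonneg _) (by exact_mod_cast hn)
      _ ≤ C * exp (-(n : ℝ)) := hbound n
      _ ≤ max C M * exp (-(n : ℝ)) := by gcongr; exact le_max_left C M

/-- If a ∈ C([0,1]) and |n ∫₀¹ e^{-nt} a(t) dt| ≤ C e^{-n} for all n ∈ ℕ,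
then a ≡ 0 on [0,1]. -/
theorem stmt_9 (a : ℝ → ℝ) (ha : ContinuousOn a (Icc 0 1))
    (C : ℝ)
    (hbound : ∀ n : ℕ, |(n : ℝ) * ∫ t in (0:ℝ)..1, Real.exp (-(n : ℝ) * t) * a t|
      ≤ C * Real.exp (-(n : ℝ))) :
    ∀ t ∈ Icc (0:ℝ) 1, a t = 0 := by
  obtain ⟨K, hK⟩ := exists_abs_integral_exp_mul_le ha hbound
  have hK_neg :
      ∀ n : ℕ, |∫ t in (0:ℝ)..1, exp (-(n : ℝ) * t) * (-a) t| ≤ K * exp (-(n : ℝ)) := by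
    simpa [mul_neg, intervalIntegral.integral_neg] using hK
  have hzero : EqOn a 0 (Ico 0 1) := fun t ht =>
    le_antisymm (nonpos_of_abs_integral_exp_mul_le ha hK ht)
      (neg_nonpos.mp (nonpos_of_abs_integral_exp_mul_le ha.neg hK_neg ht))
  exact hzero.of_subset_closure ha continuousOn_const Ico_subset_Icc_self
    (by rw [closure_Ico zero_ne_one])
end

section
/- Let a ∈ C([0,1]) satisfy |λ ∫₀¹ e^{-λt} a(t) dt| = O(e^{-λ}) as λ → ∞ through the positive reals. Then a ≡ 0. -/
/-!
The entire function `G(z) = ∫₀¹ e^{z(1-t)} a(t) dt` satisfies `‖G z‖ ≤ M e^{max(Re z, 0)}` with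
`M = max |a|`, and the hypothesis says `|G x| ≤ C / x` for real `x ≥ 1`. Phragmén–Lindelöf in the
right half-plane makes `G` bounded, so `G` is constant by Liouville, and the constant is
`lim_{x → ∞} G x = 0`. Hence `∫₀¹ (e^{-t})ⁿ a(t) dt = e^{-n} G(n) = 0` for every `n`; as polynomials
in the injective function `e^{-t}` are dense in `C([0,1])` (Stone–Weierstrass), this forces
`∫₀¹ a² = 0`, so `a = 0`.
-/

open Real Set MeasureTheory Filter Topology
open scoped Interval

section Moments

open Polynomial

theorem exists_polynomial_comp_near_of_injOn {α : Type*} [TopologicalSpace α] {s : Set α}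
    (hs : IsCompact s) {φ f : α → ℝ} (hφ : ContinuousOn φ s) (hφs : InjOn φ s)
    (hf : ContinuousOn f s) {ε : ℝ} (hε : 0 < ε) :
    ∃ p : ℝ[X], ∀ x ∈ s, |p.eval (φ x) - f x| < ε := by
  have : CompactSpace s := isCompact_iff_compactSpace.mp hs
  let Φ : C(s, ℝ) := ⟨s.domRestrict φ, hφ.domRestrict⟩
  have hsep : (aeval Φ).range.SeparatesPoints := fun x y hxy =>
    ⟨Φ, ⟨Φ, ⟨X, aeval_X (R := ℝ) Φ⟩, rfl⟩, fun h => hxy (Subtype.ext (hφs x.2 y.2 h))⟩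
  obtain ⟨⟨q, p, rfl⟩, hq⟩ := ContinuousMap.exists_mem_subalgebra_near_continuous_of_separatesPoints
    _ hsep (s.domRestrict f) hf.domRestrict ε hε
  exact ⟨p, fun x hx => by simpa [Φ, aeval_continuousMap_apply] using hq ⟨x, hx⟩⟩

theorem eqOn_zero_of_integral_mul_self_eq_zero {f : ℝ → ℝ} {a b : ℝ} (hab : a < b)
    (hf : ContinuousOn f (Icc a b)) (h : ∫ x in a..b, f x * f x = 0) : EqOn f 0 (Icc a b) := by
  have hff : ContinuousOn (fun x => f x * f x) (Icc a b) := hf.mul hf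
  have hae := (intervalIntegral.integral_eq_zero_iff_of_le_of_nonneg_ae hab.le
    (.of_forall fun x => mul_self_nonneg (f x))
    (hff.intervalIntegrable_of_Icc hab.le)).mp h
  rw [Measure.restrict_congr_set Ioc_ae_eq_Icc] at hae
  exact fun x hx => mul_self_eq_zero.mp (Measure.eqOn_Icc_of_ae_eq volume hab.ne hae hff
    continuousOn_const hx)

theorem integral_eval_mul_eq_zero {φ f : ℝ → ℝ} {a b : ℝ}
    (hint : ∀ n : ℕ, IntervalIntegrable (fun x => φ x ^ n * f x) volume a b)
    (hmom : ∀ n : ℕ, ∫ x in a..b, φ x ^ n * f x = 0) (p : ℝ[X]) :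
    ∫ x in a..b, p.eval (φ x) * f x = 0 := by
  simp_rw [eval_eq_sum_range, Finset.sum_mul, mul_assoc]
  rw [intervalIntegral.integral_finsetSum fun n _ => (hint n).const_mul _]
  exact Finset.sum_eq_zero fun n _ => by rw [intervalIntegral.integral_const_mul, hmom n, mul_zero]

theorem eqOn_zero_of_integral_pow_mul_eq_zero {φ f : ℝ → ℝ} {a b : ℝ} (hab : a < b)
    (hφ : ContinuousOn φ (Icc a b)) (hφs : InjOn φ (Icc a b)) (hf : ContinuousOn f (Icc a b))
    (hmom : ∀ n : ℕ, ∫ x in a..b, φ x ^ n * f x = 0) : EqOn f 0 (Icc a b) := by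
  refine eqOn_zero_of_integral_mul_self_eq_zero hab hf (abs_nonpos_iff.mp ?_)
  obtain ⟨M, hM⟩ := isCompact_Icc.exists_bound_of_continuousOn hf
  have hsmall : ∀ ε > 0, |∫ x in a..b, f x * f x| ≤ ε * M * (b - a) := by
    intro ε hε
    obtain ⟨p, hp⟩ := exists_polynomial_comp_near_of_injOn isCompact_Icc hφ hφs hf hε
    have hpφ : ContinuousOn (fun x => p.eval (φ x)) (Icc a b) :=
      p.continuous.comp_continuousOn hφ
    have hmomp := integral_eval_mul_eq_zero
      (fun n => ((hφ.pow n).mul hf).intervalIntegrable_of_Icc hab.le) hmom p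
    have hshift : ∫ x in a..b, f x * f x = ∫ x in a..b, (f x - p.eval (φ x)) * f x := by
      simp_rw [sub_mul]
      rw [intervalIntegral.integral_sub (by exact (hf.mul hf).intervalIntegrable_of_Icc hab.le)
        (by exact (hpφ.mul hf).intervalIntegrable_of_Icc hab.le), hmomp, sub_zero]
    rw [hshift, ← Real.norm_eq_abs, ← abs_of_pos (sub_pos.mpr hab)]
    refine intervalIntegral.norm_integral_le_of_norm_le_const fun x hx => ?_
    have hx' : x ∈ Icc a b := Ioc_subset_Icc_self (uIoc_of_le hab.le ▸ hx)
    rw [norm_mul, Real.norm_eq_abs, abs_sub_comm]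
    exact mul_le_mul (hp x hx').le (hM x hx') (norm_nonneg _) hε.le
  have hlim : Tendsto (fun ε => ε * M * (b - a)) (𝓝[>] 0) (𝓝 0) := by
    simpa using (((tendsto_id (x := 𝓝 (0 : ℝ))).mul_const M).mul_const (b - a)).mono_left
      nhdsWithin_le_nhds
  exact ge_of_tendsto hlim (eventually_nhdsWithin_of_forall hsmall)

end Moments

theorem differentiable_integral_cexp_mul {f : ℝ → ℂ} {a b : ℝ}
    (hf : IntervalIntegrable f volume a b) :
    Differentiable ℂ fun z : ℂ => ∫ t in a..b, Complex.exp (z * t) * f t := by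
  intro z₀
  obtain ⟨R, hR⟩ := isCompact_uIcc.exists_bound_of_continuousOn (continuousOn_id (s := uIcc a b))
  have hmeas : ∀ g : ℝ → ℂ, Continuous g →
      AEStronglyMeasurable (fun t => g t * f t) (volume.restrict (Ι a b)) := fun g hg =>
    hg.aestronglyMeasurable.mul hf.def'.aestronglyMeasurable
  have hderiv := intervalIntegral.hasDerivAt_integral_of_dominated_loc_of_deriv_le
    (F' := fun z t => Complex.exp (z * t) * t * f t)
    (bound := fun t => rexp ((‖z₀‖ + 1) * R) * R * ‖f t‖) (Metric.ball_mem_nhds z₀ one_pos)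
    (.of_forall fun z => hmeas (fun t => Complex.exp (z * t)) (by fun_prop))
    (hf.continuousOn_mul (by fun_prop)) (hmeas (fun t => Complex.exp (z₀ * t) * t) (by fun_prop)) ?_
    (hf.norm.const_mul _) ?_
  · exact hderiv.2.differentiableAt
  · refine .of_forall fun t ht z hz => ?_
    have ht' : ‖t‖ ≤ R := hR t (uIoc_subset_uIcc ht)
    have hz' : ‖z‖ ≤ ‖z₀‖ + 1 := by
      linarith [norm_le_norm_add_norm_sub' z z₀, (mem_ball_iff_norm.mp hz).le]
    have hexp : rexp (z * t).re ≤ rexp ((‖z₀‖ + 1) * R) := by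
      refine exp_le_exp.mpr ((Complex.re_le_norm _).trans ?_)
      rw [norm_mul, Complex.norm_real]
      exact mul_le_mul hz' ht' (norm_nonneg _) (by positivity)
    have hR0 : 0 ≤ R := (norm_nonneg t).trans ht'
    rw [norm_mul, norm_mul, Complex.norm_exp, Complex.norm_real]
    gcongr
  · refine .of_forall fun t _ z _ => ?_
    exact ((hasDerivAt_mul_const (t : ℂ)).cexp).mul_const (f t)

/-- The function `G` above, factored so that its holomorphy follows from
`differentiable_integral_cexp_mul`. -/
noncomputable def expLaplace (a : ℝ → ℝ) (z : ℂ) : ℂ :=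
  Complex.exp z * ∫ t in (0 : ℝ)..1, Complex.exp (-z * t) * a t

theorem differentiable_expLaplace {a : ℝ → ℝ} (ha : IntervalIntegrable a volume 0 1) :
    Differentiable ℂ (expLaplace a) :=
  Complex.differentiable_exp.mul
    ((differentiable_integral_cexp_mul ⟨ha.1.ofReal, ha.2.ofReal⟩).comp differentiable_neg)

theorem norm_expLaplace_le {a : ℝ → ℝ} {M : ℝ} (hM : ∀ t ∈ Icc (0 : ℝ) 1, ‖a t‖ ≤ M) (z : ℂ) :
    ‖expLaplace a z‖ ≤ M * rexp (max z.re 0) := by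
  rw [expLaplace, ← intervalIntegral.integral_const_mul]
  have := intervalIntegral.norm_integral_le_of_norm_le_const (a := 0) (b := 1)
    (f := fun t => Complex.exp z * (Complex.exp (-z * t) * a t))
    (C := rexp (max z.re 0) * M) fun t ht => ?_
  · simpa [mul_comm] using this
  rw [uIoc_of_le zero_le_one] at ht
  rw [← mul_assoc, ← Complex.exp_add, norm_mul, Complex.norm_exp, Complex.norm_real,
    Real.norm_eq_abs]
  refine mul_le_mul (exp_le_exp.mpr ?_) (hM t (Ioc_subset_Icc_self ht)) (abs_nonneg _)
    (exp_pos _).le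
  have h1t : 0 ≤ 1 - t := sub_nonneg.mpr ht.2
  calc (z + -z * t).re
      = z.re * (1 - t) := by
        rw [Complex.add_re, neg_mul, Complex.neg_re, Complex.re_mul_ofReal]; ring
    _ ≤ max z.re 0 * (1 - t) := mul_le_mul_of_nonneg_right (le_max_left _ _) h1t
    _ ≤ max z.re 0 := mul_le_of_le_one_right (le_max_right _ _) (by linarith [ht.1])

theorem expLaplace_ofReal (a : ℝ → ℝ) (x : ℝ) :
    expLaplace a x = ↑(rexp x * ∫ t in (0 : ℝ)..1, rexp (-x * t) * a t) := by
  rw [expLaplace, Complex.ofReal_mul, Complex.ofReal_exp, ← intervalIntegral.integral_ofReal]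
  push_cast
  rfl

theorem Differentiable.eq_zero_of_norm_le_exp_of_tendsto {E : Type*} [NormedAddCommGroup E]
    [NormedSpace ℂ E] {f : ℂ → E} (hf : Differentiable ℂ f) {M : ℝ}
    (hM : ∀ z, ‖f z‖ ≤ M * rexp (max z.re 0))
    (hlim : Tendsto (fun x : ℝ => f x) atTop (𝓝 0)) : f = 0 := by
  have hgrowth : ∃ c < (2 : ℝ), ∃ B, f =O[Bornology.cobounded ℂ ⊓ 𝓟 {z | 0 < z.re}]
      fun z => rexp (B * ‖z‖ ^ c) := by
    refine ⟨1, one_lt_two, 1, .of_bound M (.of_forall fun z => ?_)⟩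
    simp only [rpow_one, one_mul, Real.norm_eq_abs, abs_exp]
    refine (hM z).trans (mul_le_mul_of_nonneg_left (exp_le_exp.mpr ?_) ?_)
    · exact max_le (Complex.re_le_norm z) (norm_nonneg z)
    · exact (norm_nonneg _).trans (by simpa using hM 0)
  have hbdd : ∀ z, ‖f z‖ ≤ M := by
    intro z
    rcases le_total 0 z.re with hz | hz
    · exact PhragmenLindelof.right_half_plane_of_bounded_on_real hf.diffContOnCl hgrowth
        hlim.norm.isBoundedUnder_le (fun y => by simpa using hM (y * Complex.I)) hz
    · simpa [max_eq_right hz] using hM z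
  have hconst : ∀ z w, f z = f w :=
    hf.apply_eq_apply_of_bounded (isBounded_iff_forall_norm_le.mpr ⟨M, by simpa using hbdd⟩)
  funext z
  refine tendsto_nhds_unique ?_ hlim
  simp only [hconst _ z, tendsto_const_nhds]

theorem norm_expLaplace_ofReal_le {a : ℝ → ℝ} {C x : ℝ} (hx : 0 < x)
    (h : |x * ∫ t in (0 : ℝ)..1, rexp (-x * t) * a t| ≤ C * rexp (-x)) :
    ‖expLaplace a x‖ ≤ C / x := by
  rw [abs_mul, abs_of_pos hx] at h
  rw [expLaplace_ofReal, Complex.norm_real, Real.norm_eq_abs, abs_mul, abs_of_pos (exp_pos x),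
    le_div_iff₀ hx]
  calc rexp x * |∫ t in (0 : ℝ)..1, rexp (-x * t) * a t| * x
      = rexp x * (x * |∫ t in (0 : ℝ)..1, rexp (-x * t) * a t|) := by ring
    _ ≤ rexp x * (C * rexp (-x)) := mul_le_mul_of_nonneg_left h (exp_pos x).le
    _ = C := by rw [mul_left_comm, ← exp_add, add_neg_cancel, exp_zero, mul_one]

/-- If a ∈ C([0,1]) and |λ ∫₀¹ e^{-λt} a(t) dt| ≤ C e^{-λ} for all real λ ≥ 1,
then a ≡ 0 on [0,1]. -/
theorem stmt_10 (a : ℝ → ℝ) (ha : ContinuousOn a (Icc 0 1))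
    (C : ℝ)
    (hbound : ∀ l : ℝ, 1 ≤ l → |l * ∫ t in (0:ℝ)..1, Real.exp (-l * t) * a t|
      ≤ C * Real.exp (-l)) :
    ∀ t ∈ Icc (0:ℝ) 1, a t = 0 := by
  obtain ⟨M, hM⟩ := isCompact_Icc.exists_bound_of_continuousOn ha
  have hlim : Tendsto (fun x : ℝ => expLaplace a x) atTop (𝓝 0) := by
    refine squeeze_zero_norm' (a := fun x => C / x) ?_ (tendsto_const_nhds.div_atTop tendsto_id)
    filter_upwards [eventually_ge_atTop 1] with x hx
    exact norm_expLaplace_ofReal_le (by linarith) (hbound x hx)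
  have hzero : expLaplace a = 0 :=
    (differentiable_expLaplace (ha.intervalIntegrable_of_Icc zero_le_one))
      |>.eq_zero_of_norm_le_exp_of_tendsto (norm_expLaplace_le hM) hlim
  refine eqOn_zero_of_integral_pow_mul_eq_zero (φ := fun t => rexp (-t)) zero_lt_one
    (by fun_prop) (fun x _ y _ h => by simpa using h) ha fun n => ?_
  have hn := congrFun hzero ((n : ℝ) : ℂ)
  rw [expLaplace_ofReal, Pi.zero_apply, Complex.ofReal_eq_zero, mul_eq_zero] at hn
  simpa [← Real.exp_nat_mul, mul_comm] using hn.resolve_left (exp_pos _).ne'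
end

section
/- Let b ∈ C([0,1]²) with ∂_s b continuous and b(t,0) > 0 for all t, and let a ∈ L^∞([0,1]). If ∫₀^u b(t, u−t) a(t) dt = 0 for every u ∈ [0,1], then a = 0 almost everywhere. -/
/-!
Writing `b t (u - t) = b t 0 + ∫ r in t..u, bs t (r - t)` and exchanging the order of
integration over the triangle `0 ≤ t ≤ r ≤ u` turns the hypothesis into
`∫ t in 0..u, (b t 0 * a t + h t) = 0` for all `u`, where `h r = ∫ t in 0..r, bs t (r - t) * a t`.
By Lebesgue's differentiation theorem `b t 0 * a t = - h t` for a.e. `t`. As `b · 0` is bounded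
below by some `c > 0` and `|bs| ≤ M`, this gives `|a t| ≤ (M / c) * ∫ s in 0..t, |a s|`, and
Grönwall's inequality forces `∫ s in 0..t, |a s| = 0`.
-/

open Set intervalIntegral MeasureTheory Filter Topology Function

theorem eq_zero_of_le_mul_integral {w : ℝ → ℝ} {C T : ℝ} (hw : ContinuousOn w (Icc 0 T))
    (hw0 : ∀ t ∈ Icc 0 T, 0 ≤ w t) (h : ∀ t ∈ Icc 0 T, w t ≤ C * ∫ s in 0..t, w s) :
    ∀ t ∈ Icc 0 T, w t = 0 := by
  have hV : ∀ x ∈ Icc 0 T, HasDerivWithinAt (fun u => ∫ s in 0..u, w s) (w x) (Icc 0 T) x := by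
    intro x hx
    have : Fact (x ∈ Icc 0 T) := ⟨hx⟩
    exact integral_hasDerivWithinAt_right
      ((hw.mono (uIcc_subset_Icc (left_mem_Icc.2 (hx.1.trans hx.2)) hx)).intervalIntegrable)
      (hw.stronglyMeasurableAtFilter_nhdsWithin measurableSet_Icc x) (hw x hx)
  have hV0 := eq_zero_of_abs_deriv_le_mul_abs_self_of_eq_zero_right
    (fun x hx => (hV x hx).continuousWithinAt)
    (fun x hx => (hV x (Ico_subset_Icc_self hx)).mono_of_mem_nhdsWithin (Icc_mem_nhdsGE_of_mem hx))
    integral_same fun x hx => by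
      rw [Real.norm_of_nonneg (hw0 x (Ico_subset_Icc_self hx)), Real.norm_of_nonneg
        (integral_nonneg hx.1 fun s hs => hw0 s ⟨hs.1, hs.2.trans hx.2.le⟩)]
      exact h x (Ico_subset_Icc_self hx)
  intro t ht
  exact le_antisymm ((h t ht).trans_eq (by rw [hV0 t ht, mul_zero])) (hw0 t ht)

theorem ae_eq_zero_of_abs_le_mul_integral_abs {f : ℝ → ℝ} {C T : ℝ}
    (hf : IntegrableOn f (Icc 0 T))
    (h : ∀ᵐ t ∂volume.restrict (Icc 0 T), |f t| ≤ C * ∫ s in 0..t, |f s|) :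
    ∀ᵐ t ∂volume.restrict (Icc 0 T), f t = 0 := by
  rcases lt_or_ge T 0 with hT | hT
  · simp [Icc_eq_empty_of_lt hT]
  have habs : ∀ t ∈ Icc 0 T, IntervalIntegrable (fun s => |f s|) volume 0 t := fun t ht =>
    (intervalIntegrable_iff_integrableOn_Icc_of_le ht.1).2
      (hf.mono_set (Icc_subset_Icc le_rfl ht.2)).abs
  have hw : ContinuousOn (fun t => ∫ s in 0..t, |f s|) (Icc 0 T) := by
    rw [← uIcc_of_le hT]
    exact continuousOn_primitive_interval (by rw [uIcc_of_le hT]; exact hf.abs)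
  have hwT := eq_zero_of_le_mul_integral (C := C) hw
    (fun t ht => integral_nonneg ht.1 fun _ _ => abs_nonneg _)
    (fun t ht => by
      rw [← intervalIntegral.integral_const_mul]
      refine integral_mono_ae_restrict ht.1 (habs t ht)
        ((hw.mono (Icc_subset_Icc le_rfl ht.2)).intervalIntegrable_of_Icc ht.1 |>.const_mul C) ?_
      exact ae_restrict_of_ae_restrict_of_subset (Icc_subset_Icc le_rfl ht.2) h)
    T (right_mem_Icc.2 hT)
  rw [integral_eq_zero_iff_of_le_of_nonneg_ae hT (ae_of_all _ fun _ => abs_nonneg _)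
    (habs T (right_mem_Icc.2 hT))] at hwT
  rw [← restrict_Ioc_eq_restrict_Icc]
  filter_upwards [hwT] with t ht
  simpa using ht

theorem ae_eq_zero_of_forall_intervalIntegral_eq_zero {E : Type*} [NormedAddCommGroup E]
    [NormedSpace ℝ E] [CompleteSpace E] {f : ℝ → E} {T : ℝ} (hf : IntervalIntegrable f volume 0 T)
    (h : ∀ u ∈ Icc 0 T, ∫ t in 0..u, f t = 0) :
    ∀ᵐ t ∂volume.restrict (Icc 0 T), f t = 0 := by
  rw [← restrict_Ioo_eq_restrict_Icc, ae_restrict_iff' measurableSet_Ioo]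
  filter_upwards [hf.ae_hasDerivAt_integral] with x hx hxT
  have hxI : x ∈ uIcc 0 T := by
    rw [uIcc_of_le (hxT.1.trans hxT.2).le]; exact Ioo_subset_Icc_self hxT
  have hzero : (fun u => ∫ t in 0..u, f t) =ᶠ[𝓝 x] fun _ => 0 :=
    eventuallyEq_of_mem (Icc_mem_nhds hxT.1 hxT.2) h
  exact (hx hxI 0 left_mem_uIcc).unique ((hasDerivAt_const x 0).congr_of_eventuallyEq hzero)

section Triangle

variable {E : Type*} [NormedAddCommGroup E] {k : ℝ → ℝ → E} {u : ℝ}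

theorem integrable_indicator_le_prod
    (hk : IntegrableOn (uncurry k) ({p | p.1 ≤ p.2} ∩ Ioc 0 u ×ˢ Ioc 0 u)) :
    Integrable ({p : ℝ × ℝ | p.1 ≤ p.2}.indicator (uncurry k))
      ((volume.restrict (Ioc 0 u)).prod (volume.restrict (Ioc 0 u))) := by
  rwa [Measure.prod_restrict, ← Measure.volume_eq_prod,
    integrable_indicator_iff (measurableSet_le measurable_fst measurable_snd), IntegrableOn,
    Measure.restrict_restrict (measurableSet_le measurable_fst measurable_snd)]

theorem setIntegral_indicator_le_left [NormedSpace ℝ E] {t : ℝ} (ht : t ∈ Ioc 0 u) :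
    ∫ r in Ioc 0 u, {p : ℝ × ℝ | p.1 ≤ p.2}.indicator (uncurry k) (t, r) = ∫ r in t..u, k t r := by
  have hsec : ∀ r,
      {p : ℝ × ℝ | p.1 ≤ p.2}.indicator (uncurry k) (t, r) = (Ici t).indicator (k t) r :=
    fun r => by simp [indicator_apply]
  have hset : Ici t ∩ Ioc 0 u = Icc t u := by
    ext r; simp only [mem_inter_iff, mem_Ici, mem_Ioc, mem_Icc]
    exact ⟨fun ⟨h1, _, h2⟩ => ⟨h1, h2⟩, fun ⟨h1, h2⟩ => ⟨h1, ht.1.trans_le h1, h2⟩⟩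
  simp_rw [hsec]
  rw [MeasureTheory.integral_indicator measurableSet_Ici,
    Measure.restrict_restrict measurableSet_Ici, hset,
    integral_Icc_eq_integral_Ioc, integral_of_le ht.2]

theorem setIntegral_indicator_le_right [NormedSpace ℝ E] {r : ℝ} (hr : r ∈ Icc 0 u) :
    ∫ t in Ioc 0 u, {p : ℝ × ℝ | p.1 ≤ p.2}.indicator (uncurry k) (t, r) = ∫ t in 0..r, k t r := by
  have hsec : ∀ t, {p : ℝ × ℝ | p.1 ≤ p.2}.indicator (uncurry k) (t, r) =
      (Iic r).indicator (fun t => k t r) t :=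
    fun t => by simp [indicator_apply]
  have hset : Iic r ∩ Ioc 0 u = Ioc 0 r := by
    ext t; simp only [mem_inter_iff, mem_Iic, mem_Ioc]
    exact ⟨fun ⟨h1, h2, _⟩ => ⟨h2, h1⟩, fun ⟨h1, h2⟩ => ⟨h2, h1, h2.trans hr.2⟩⟩
  simp_rw [hsec]
  rw [MeasureTheory.integral_indicator measurableSet_Iic,
    Measure.restrict_restrict measurableSet_Iic, hset,
    integral_of_le hr.1]

theorem integrableOn_integral_triangle [NormedSpace ℝ E]
    (hk : IntegrableOn (uncurry k) ({p | p.1 ≤ p.2} ∩ Ioc 0 u ×ˢ Ioc 0 u)) :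
    IntegrableOn (fun r => ∫ t in 0..r, k t r) (Ioc 0 u) := by
  refine (integrable_indicator_le_prod hk).integral_prod_right.congr ?_
  filter_upwards [ae_restrict_mem measurableSet_Ioc] with r hr
  exact setIntegral_indicator_le_right (Ioc_subset_Icc_self hr)

theorem integral_integral_triangle_swap [NormedSpace ℝ E] (hu : 0 ≤ u)
    (hk : IntegrableOn (uncurry k) ({p | p.1 ≤ p.2} ∩ Ioc 0 u ×ˢ Ioc 0 u)) :
    ∫ t in 0..u, ∫ r in t..u, k t r = ∫ r in 0..u, ∫ t in 0..r, k t r := by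
  rw [integral_of_le hu, integral_of_le hu]
  calc ∫ t in Ioc 0 u, ∫ r in t..u, k t r
      = ∫ t in Ioc 0 u, ∫ r in Ioc 0 u, {p : ℝ × ℝ | p.1 ≤ p.2}.indicator (uncurry k) (t, r) :=
        setIntegral_congr_fun measurableSet_Ioc fun t ht => (setIntegral_indicator_le_left ht).symm
    _ = ∫ r in Ioc 0 u, ∫ t in Ioc 0 u, {p : ℝ × ℝ | p.1 ≤ p.2}.indicator (uncurry k) (t, r) :=
        integral_integral_swap (integrable_indicator_le_prod hk)
    _ = ∫ r in Ioc 0 u, ∫ t in 0..r, k t r :=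
        setIntegral_congr_fun measurableSet_Ioc fun r hr =>
          setIntegral_indicator_le_right (Ioc_subset_Icc_self hr)

end Triangle

theorem eq_add_integral_of_hasDerivWithinAt_Icc {E : Type*} [NormedAddCommGroup E]
    [NormedSpace ℝ E] [CompleteSpace E] {g g' : ℝ → E} {a b s : ℝ}
    (hg : ∀ x ∈ Icc a b, HasDerivWithinAt g (g' x) (Icc a b) x) (hg' : ContinuousOn g' (Icc a b))
    (hs : s ∈ Icc a b) : g s = g a + ∫ x in a..s, g' x := by
  have hsub : Icc a s ⊆ Icc a b := Icc_subset_Icc le_rfl hs.2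
  rw [integral_eq_sub_of_hasDeriv_right_of_le hs.1
    (fun x hx => ((hg x (hsub hx)).continuousWithinAt).mono hsub)
    (fun x hx => ((hg x (hsub (Ioo_subset_Icc_self hx))).hasDerivAt
      (Icc_mem_nhds hx.1 (hx.2.trans_le hs.2))).hasDerivWithinAt)
    ((hg'.mono (uIcc_subset_Icc (left_mem_Icc.2 (hs.1.trans hs.2)) hs)).intervalIntegrable)]
  abel

section Kernel

variable {b bs : ℝ → ℝ → ℝ} {a : ℝ → ℝ}

theorem apply_sub_eq_add_integral
    (hbs : ∀ t ∈ Icc (0:ℝ) 1, ∀ s ∈ Icc (0:ℝ) 1,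
      HasDerivWithinAt (fun s' => b t s') (bs t s) (Icc 0 1) s)
    (hbscont : ContinuousOn (fun p : ℝ × ℝ => bs p.1 p.2) (Icc 0 1 ×ˢ Icc 0 1))
    {t u : ℝ} (ht : t ∈ Icc (0:ℝ) 1) (htu : t ≤ u) (hu : u ≤ 1) :
    b t (u - t) = b t 0 + ∫ r in t..u, bs t (r - t) := by
  rw [integral_comp_sub_right (bs t), sub_self]
  exact eq_add_integral_of_hasDerivWithinAt_Icc (hbs t ht)
    (hbscont.comp (by fun_prop : Continuous fun s => (t, s)).continuousOn fun s hs => ⟨ht, hs⟩)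
    ⟨sub_nonneg.2 htu, by linarith [ht.1]⟩

theorem integrableOn_kernel_mul_triangle
    (hbscont : ContinuousOn (fun p : ℝ × ℝ => bs p.1 p.2) (Icc 0 1 ×ˢ Icc 0 1))
    (ha : Measurable a) {K : ℝ} (haK : ∀ t ∈ Icc (0:ℝ) 1, |a t| ≤ K) :
    IntegrableOn (uncurry fun t r => bs t (r - t) * a t)
      ({p | p.1 ≤ p.2} ∩ Ioc 0 1 ×ˢ Ioc 0 1) := by
  set D : Set (ℝ × ℝ) := {p | p.1 ≤ p.2} ∩ Ioc 0 1 ×ˢ Ioc 0 1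
  have hD : MeasurableSet D :=
    (measurableSet_le measurable_fst measurable_snd).inter
      (measurableSet_Ioc.prod measurableSet_Ioc)
  have hmaps : MapsTo (fun p : ℝ × ℝ => (p.1, p.2 - p.1)) D (Icc 0 1 ×ˢ Icc 0 1) := by
    rintro ⟨t, r⟩ ⟨htr, ⟨ht0, ht1⟩, -, hr1⟩
    exact ⟨⟨ht0.le, ht1⟩, sub_nonneg.2 htr, by linarith⟩
  obtain ⟨M, hM⟩ := (isCompact_Icc.prod isCompact_Icc).exists_bound_of_continuousOn hbscont
  refine IntegrableOn.of_bound
    (((Metric.isBounded_Ioc 0 1).prod (Metric.isBounded_Ioc 0 1)).subset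
      inter_subset_right).measure_lt_top
    (((hbscont.comp (by fun_prop) hmaps).aestronglyMeasurable hD).mul
      (ha.comp measurable_fst).aestronglyMeasurable) (M * K) ?_
  filter_upwards [ae_restrict_mem hD] with p hp
  rw [uncurry_apply_pair, norm_mul, Real.norm_eq_abs (a p.1)]
  exact mul_le_mul (hM _ (hmaps hp)) (haK _ (Ioc_subset_Icc_self hp.2.1)) (abs_nonneg _)
    ((norm_nonneg _).trans (hM _ (hmaps hp)))

theorem integral_kernel_mul_eq
    (hb : ContinuousOn (fun p : ℝ × ℝ => b p.1 p.2) (Icc 0 1 ×ˢ Icc 0 1))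
    (hbs : ∀ t ∈ Icc (0:ℝ) 1, ∀ s ∈ Icc (0:ℝ) 1,
      HasDerivWithinAt (fun s' => b t s') (bs t s) (Icc 0 1) s)
    (hbscont : ContinuousOn (fun p : ℝ × ℝ => bs p.1 p.2) (Icc 0 1 ×ˢ Icc 0 1))
    (ha : IntegrableOn a (Icc 0 1))
    (hk : IntegrableOn (uncurry fun t r => bs t (r - t) * a t)
      ({p | p.1 ≤ p.2} ∩ Ioc 0 1 ×ˢ Ioc 0 1))
    {u : ℝ} (hu : u ∈ Icc (0:ℝ) 1) :
    ∫ t in 0..u, b t (u - t) * a t =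
      ∫ t in 0..u, (b t 0 * a t + ∫ s in 0..t, bs s (t - s) * a s) := by
  have hsub : Icc 0 u ⊆ Icc (0:ℝ) 1 := Icc_subset_Icc le_rfl hu.2
  have hau : IntegrableOn a (Icc 0 u) := ha.mono_set hsub
  have hshift : IntervalIntegrable (fun t => b t (u - t) * a t) volume 0 u :=
    (intervalIntegrable_iff_integrableOn_Icc_of_le hu.1).2 <| hau.continuousOn_mul
      (hb.comp (by fun_prop : Continuous fun t : ℝ => (t, u - t)).continuousOn
        fun t ht => ⟨hsub ht, sub_nonneg.2 ht.2, by linarith [ht.1, hu.2]⟩)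
      isCompact_Icc
  have hzero : IntervalIntegrable (fun t => b t 0 * a t) volume 0 u :=
    (intervalIntegrable_iff_integrableOn_Icc_of_le hu.1).2 <| hau.continuousOn_mul
      (hb.comp (by fun_prop : Continuous fun t : ℝ => (t, (0:ℝ))).continuousOn
        fun t ht => ⟨hsub ht, left_mem_Icc.2 zero_le_one⟩) isCompact_Icc
  have hku : IntegrableOn (uncurry fun t r => bs t (r - t) * a t)
      ({p | p.1 ≤ p.2} ∩ Ioc 0 u ×ˢ Ioc 0 u) :=
    hk.mono_set (inter_subset_inter_right _ (prod_mono (Ioc_subset_Ioc le_rfl hu.2)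
      (Ioc_subset_Ioc le_rfl hu.2)))
  have hdiff : EqOn (fun t => b t (u - t) * a t - b t 0 * a t)
      (fun t => ∫ r in t..u, bs t (r - t) * a t) (uIcc 0 u) := by
    intro t ht
    rw [uIcc_of_le hu.1] at ht
    simp only [intervalIntegral.integral_mul_const,
      apply_sub_eq_add_integral hbs hbscont (hsub ht) ht.2 hu.2]
    ring
  rw [integral_add hzero ((intervalIntegrable_iff_integrableOn_Ioc_of_le hu.1).2
      (integrableOn_integral_triangle hku)), ← integral_integral_triangle_swap hu.1 hku,
    ← integral_congr hdiff, integral_sub hshift hzero]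
  abel

theorem abs_integral_kernel_mul_le {M : ℝ}
    (hM : ∀ p ∈ Icc (0:ℝ) 1 ×ˢ Icc (0:ℝ) 1, ‖bs p.1 p.2‖ ≤ M) (ha : IntegrableOn a (Icc 0 1))
    {r : ℝ} (hr : r ∈ Icc (0:ℝ) 1) :
    |∫ t in 0..r, bs t (r - t) * a t| ≤ M * ∫ t in 0..r, |a t| := by
  rw [← Real.norm_eq_abs, ← intervalIntegral.integral_const_mul]
  refine norm_integral_le_of_norm_le hr.1 (ae_of_all _ fun t ht => ?_)
    (((intervalIntegrable_iff_integrableOn_Icc_of_le hr.1).2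
      (ha.mono_set (Icc_subset_Icc le_rfl hr.2))).abs.const_mul M)
  rw [norm_mul, Real.norm_eq_abs (a t)]
  exact mul_le_mul_of_nonneg_right
    (hM (t, r - t) ⟨⟨ht.1.le, ht.2.trans hr.2⟩, sub_nonneg.2 ht.2, by linarith [ht.1, hr.2]⟩)
    (abs_nonneg _)

end Kernel

/-- If b ∈ C([0,1]²) with continuous ∂_s b and b(t,0) > 0, a ∈ L^∞([0,1]),
and ∫₀^u b(t, u−t) a(t) dt = 0 for every u ∈ [0,1], then a = 0 a.e. on [0,1]. -/
theorem stmt_11 (b : ℝ → ℝ → ℝ) (bs : ℝ → ℝ → ℝ)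
    (hb : ContinuousOn (fun p : ℝ × ℝ => b p.1 p.2) (Icc 0 1 ×ˢ Icc 0 1))
    (hbs : ∀ t ∈ Icc (0:ℝ) 1, ∀ s ∈ Icc (0:ℝ) 1,
      HasDerivWithinAt (fun s' => b t s') (bs t s) (Icc 0 1) s)
    (hbscont : ContinuousOn (fun p : ℝ × ℝ => bs p.1 p.2) (Icc 0 1 ×ˢ Icc 0 1))
    (hbpos : ∀ t ∈ Icc (0:ℝ) 1, 0 < b t 0)
    (a : ℝ → ℝ) (ha : Measurable a)
    (K : ℝ) (haK : ∀ t ∈ Icc (0:ℝ) 1, |a t| ≤ K)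
    (hconv : ∀ u ∈ Icc (0:ℝ) 1, (∫ t in (0:ℝ)..u, b t (u - t) * a t) = 0) :
    ∀ᵐ t ∂(volume.restrict (Icc (0:ℝ) 1)), a t = 0 := by
  have haI : IntegrableOn a (Icc 0 1) :=
    IntegrableOn.of_bound measure_Icc_lt_top ha.aestronglyMeasurable K
      ((ae_restrict_iff' measurableSet_Icc).2 (ae_of_all _ haK))
  have hb0 : ContinuousOn (fun t => b t 0) (Icc 0 1) :=
    hb.comp (by fun_prop : Continuous fun t : ℝ => (t, (0:ℝ))).continuousOn
      fun t ht => ⟨ht, left_mem_Icc.2 zero_le_one⟩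
  obtain ⟨t₀, ht₀, hmin⟩ := isCompact_Icc.exists_isMinOn (nonempty_Icc.2 zero_le_one) hb0
  obtain ⟨M, hM⟩ := (isCompact_Icc.prod isCompact_Icc).exists_bound_of_continuousOn hbscont
  have hk := integrableOn_kernel_mul_triangle hbscont ha haK
  have hsecond : ∀ᵐ t ∂(volume.restrict (Icc (0:ℝ) 1)),
      b t 0 * a t + ∫ s in 0..t, bs s (t - s) * a s = 0 := by
    refine ae_eq_zero_of_forall_intervalIntegral_eq_zero ?_ fun u hu => ?_
    · exact ((intervalIntegrable_iff_integrableOn_Icc_of_le zero_le_one).2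
        (haI.continuousOn_mul hb0 isCompact_Icc)).add
        ((intervalIntegrable_iff_integrableOn_Ioc_of_le zero_le_one).2
          (integrableOn_integral_triangle hk))
    · rw [← integral_kernel_mul_eq hb hbs hbscont haI hk hu, hconv u hu]
  refine ae_eq_zero_of_abs_le_mul_integral_abs (C := M / b t₀ 0) haI ?_
  filter_upwards [hsecond, ae_restrict_mem measurableSet_Icc] with t ht htI
  rw [div_mul_eq_mul_div, le_div_iff₀ (hbpos t₀ ht₀)]
  calc |a t| * b t₀ 0 ≤ |a t| * b t 0 := mul_le_mul_of_nonneg_left (hmin htI) (abs_nonneg _)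
    _ = |∫ s in 0..t, bs s (t - s) * a s| := by
      rw [← abs_of_pos (hbpos t htI), ← abs_mul, mul_comm, eq_neg_of_add_eq_zero_left ht, abs_neg]
    _ ≤ M * ∫ s in 0..t, |a s| := abs_integral_kernel_mul_le hM haI htI
end

section
/- Let F_x(z) = z^{-2} exp(−z² − 1/(xz) + i z⁴). For each fixed x > 0, ∫₄^∞ F_x(r) dr = e^{iπ/8} ∫₄^∞ F_x(r e^{iπ/8}) dr + ∫₀^{π/8} F_x(4 e^{iθ}) · 4i e^{iθ} dθ. -/
/-!
In the coordinate `w = log z` the closed annular sector `{r ≤ ‖z‖ ≤ R, 0 ≤ arg z ≤ α}` becomes a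
rectangle, and `w ↦ f (exp w) * exp w` is entire whenever `f` is holomorphic off `0`; Cauchy's
theorem for rectangles then gives the contour identity on the sector. On the sector
`0 ≤ arg z ≤ π / 8` the exponent of `F_x` has nonpositive real part (`Re z², Re (1 / (x z)) ≥ 0` and
`Re (i z⁴) = -Im z⁴ ≤ 0`), so `‖F_x z‖ ≤ ‖z‖⁻²`: both ray integrals converge and the outer arc is
`O(1 / R)`, which lets `R → ∞`.
-/

open Real Set intervalIntegral Complex MeasureTheory Filter Topology

lemma norm_ofReal_mul_exp_I_mul {ρ : ℝ} (hρ : 0 ≤ ρ) (θ : ℝ) :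
    ‖(ρ : ℂ) * cexp (I * θ)‖ = ρ := by
  rw [norm_mul, norm_real, mul_comm I, norm_exp_ofReal_mul_I, mul_one, Real.norm_of_nonneg hρ]

lemma ofReal_mul_exp_I_mul_pow (ρ θ : ℝ) (n : ℕ) :
    ((ρ : ℂ) * cexp (I * θ)) ^ n = ((ρ ^ n : ℝ) : ℂ) * cexp (((n * θ : ℝ) : ℂ) * I) := by
  rw [mul_pow, ← Complex.exp_nat_mul]; push_cast; ring_nf

lemma re_ofReal_mul_exp_I_mul_pow (ρ θ : ℝ) (n : ℕ) :
    (((ρ : ℂ) * cexp (I * θ)) ^ n).re = ρ ^ n * Real.cos (n * θ) := by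
  rw [ofReal_mul_exp_I_mul_pow, re_ofReal_mul, exp_ofReal_mul_I_re]

lemma im_ofReal_mul_exp_I_mul_pow (ρ θ : ℝ) (n : ℕ) :
    (((ρ : ℂ) * cexp (I * θ)) ^ n).im = ρ ^ n * Real.sin (n * θ) := by
  rw [ofReal_mul_exp_I_mul_pow, im_ofReal_mul, exp_ofReal_mul_I_im]

lemma integral_exp_smul_comp_exp {E : Type*} [NormedAddCommGroup E] [NormedSpace ℝ E]
    (g : ℝ → E) {a b : ℝ} (ha : 0 < a) (hb : 0 < b) :
    ∫ t in Real.log a..Real.log b, Real.exp t • g (Real.exp t) = ∫ r in a..b, g r := by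
  simpa only [Real.exp_log ha, Real.exp_log hb, Function.comp_apply] using
    integral_deriv_smul_comp_of_deriv_nonneg (a := Real.log a) (b := Real.log b) (g := g)
      Real.continuous_exp.continuousOn
      (fun t _ => Real.hasDerivAt_exp t) (fun t _ => (Real.exp_pos t).le)

noncomputable def sectorArcIntegral (f : ℂ → ℂ) (ρ α : ℝ) : ℂ :=
  ∫ θ in (0 : ℝ)..α, f (ρ * cexp (I * θ)) * (ρ * I * cexp (I * θ))

section SectorContour

variable {f : ℂ → ℂ} {r α C : ℝ}

lemma integral_boundary_annularSector_eq_zero_of_differentiableOn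
    (hf : DifferentiableOn ℂ f {0}ᶜ) {R : ℝ} (hr : 0 < r) (hR : 0 < R) :
    (∫ t in r..R, f t) - cexp (I * α) * (∫ t in r..R, f (t * cexp (I * α)))
      + sectorArcIntegral f R α - sectorArcIntegral f r α = 0 := by
  set g : ℂ → ℂ := fun w => f (cexp w) * cexp w
  have hg : DifferentiableOn ℂ g univ :=
    (hf.comp differentiable_exp.differentiableOn fun w _ => exp_ne_zero w).mul
      differentiable_exp.differentiableOn
  have hrect := integral_boundary_rect_eq_zero_of_differentiableOn g (Real.log r)
    (Real.log R + α * I) (hg.mono (subset_univ _))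
  have hside (c y : ℝ) :
      g (c + y * I) = f (Real.exp c * cexp (I * y)) * (Real.exp c * cexp (I * y)) := by
    simp only [g, Complex.exp_add, ofReal_exp, mul_comm (y : ℂ) I]
  have hbottom : ∫ t in Real.log r..Real.log R, g (t + (0 : ℝ) * I) = ∫ t in r..R, f t := by
    rw [← integral_exp_smul_comp_exp _ hr hR]
    congr 1; ext t
    simp [g, real_smul, mul_comm]
  have htop : ∫ t in Real.log r..Real.log R, g (t + α * I)
      = cexp (I * α) * ∫ t in r..R, f (t * cexp (I * α)) := by
    rw [← integral_exp_smul_comp_exp _ hr hR, ← intervalIntegral.integral_const_mul]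
    congr 1; ext t
    simp only [hside, real_smul]
    ring_nf
  have harc (ρ : ℝ) (hρ : 0 < ρ) :
      I • ∫ y in (0 : ℝ)..α, g (Real.log ρ + y * I) = sectorArcIntegral f ρ α := by
    rw [sectorArcIntegral, smul_eq_mul, ← intervalIntegral.integral_const_mul]
    congr 1; ext y
    rw [hside, Real.exp_log hρ]
    ring
  simp only [add_re, ofReal_re, mul_re, I_re, I_im, ofReal_im, add_im, mul_im, mul_zero, mul_one,
    sub_zero, add_zero, zero_add] at hrect
  rw [hbottom, htop, harc R hR, harc r hr] at hrect
  exact hrect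

lemma integrableOn_Ioi_comp_ofReal_mul_of_norm_le (hf : DifferentiableOn ℂ f {0}ᶜ)
    (hr : 0 < r) (θ : ℝ) (hdecay : ∀ ρ ≥ r, ‖f (ρ * cexp (I * θ))‖ ≤ C / ρ ^ 2) :
    IntegrableOn (fun t : ℝ => f (t * cexp (I * θ))) (Ioi r) := by
  have hcont : ContinuousOn (fun t : ℝ => f (t * cexp (I * θ))) (Ioi r) :=
    hf.continuousOn.comp (by fun_prop) fun t ht =>
      mul_ne_zero (ofReal_ne_zero.2 (hr.trans ht).ne') (exp_ne_zero _)
  refine Integrable.mono'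
    ((integrableOn_Ioi_rpow_of_lt (by norm_num : (-2 : ℝ) < -1) hr).const_mul C)
    (hcont.aestronglyMeasurable measurableSet_Ioi) ?_
  filter_upwards [ae_restrict_mem measurableSet_Ioi] with t ht
  rw [Real.rpow_neg (hr.trans ht).le, Real.rpow_two, ← div_eq_mul_inv]
  exact hdecay t (le_of_lt ht)

lemma norm_sectorArcIntegral_le (hα : 0 ≤ α) {ρ : ℝ} (hρ : 0 < ρ)
    (hdecay : ∀ θ ∈ Icc 0 α, ‖f (ρ * cexp (I * θ))‖ ≤ C / ρ ^ 2) :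
    ‖sectorArcIntegral f ρ α‖ ≤ C * α / ρ := by
  have hbound :
      ∀ θ ∈ uIoc 0 α, ‖f (ρ * cexp (I * θ)) * (ρ * I * cexp (I * θ))‖ ≤ C / ρ := by
    intro θ hθ
    rw [uIoc_of_le hα] at hθ
    rw [norm_mul, mul_right_comm, norm_mul, norm_I, mul_one, norm_ofReal_mul_exp_I_mul hρ.le]
    calc ‖f (ρ * cexp (I * θ))‖ * ρ ≤ C / ρ ^ 2 * ρ := by
          gcongr; exact hdecay θ (Ioc_subset_Icc_self hθ)
      _ = C / ρ := by field_simp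
  calc ‖sectorArcIntegral f ρ α‖ ≤ C / ρ * |α - 0| := norm_integral_le_of_norm_le_const hbound
    _ = C * α / ρ := by rw [sub_zero, abs_of_nonneg hα]; ring

lemma tendsto_sectorArcIntegral_atTop (hα : 0 ≤ α)
    (hdecay : ∀ ρ ≥ r, ∀ θ ∈ Icc 0 α, ‖f (ρ * cexp (I * θ))‖ ≤ C / ρ ^ 2) :
    Tendsto (fun ρ => sectorArcIntegral f ρ α) atTop (𝓝 0) := by
  refine squeeze_zero_norm' (a := fun ρ => C * α / ρ) ?_
    (tendsto_const_nhds.div_atTop tendsto_id)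
  filter_upwards [eventually_ge_atTop r, eventually_gt_atTop 0] with ρ hρr hρ
  exact norm_sectorArcIntegral_le hα hρ (hdecay ρ hρr)

theorem integral_Ioi_eq_rotate_add_sectorArcIntegral (hf : DifferentiableOn ℂ f {0}ᶜ)
    (hr : 0 < r) (hα : 0 ≤ α)
    (hdecay : ∀ ρ ≥ r, ∀ θ ∈ Icc 0 α, ‖f (ρ * cexp (I * θ))‖ ≤ C / ρ ^ 2) :
    ∫ t in Ioi r, f t
      = cexp (I * α) * (∫ t in Ioi r, f (t * cexp (I * α))) + sectorArcIntegral f r α := by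
  have hreal : IntegrableOn (fun t : ℝ => f t) (Ioi r) := by
    simpa using integrableOn_Ioi_comp_ofReal_mul_of_norm_le hf hr 0
      fun ρ hρ => hdecay ρ hρ 0 (left_mem_Icc.2 hα)
  have hrot := integrableOn_Ioi_comp_ofReal_mul_of_norm_le hf hr α
      fun ρ hρ => hdecay ρ hρ α (right_mem_Icc.2 hα)
  have hlim : Tendsto (fun R => (∫ t in r..R, f t)
      - cexp (I * α) * (∫ t in r..R, f (t * cexp (I * α)))
      + sectorArcIntegral f R α - sectorArcIntegral f r α) atTop
      (𝓝 ((∫ t in Ioi r, f t) - cexp (I * α) * (∫ t in Ioi r, f (t * cexp (I * α)))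
      + 0 - sectorArcIntegral f r α)) :=
    (((intervalIntegral_tendsto_integral_Ioi r hreal tendsto_id).sub
      ((intervalIntegral_tendsto_integral_Ioi r hrot tendsto_id).const_mul _)).add
      (tendsto_sectorArcIntegral_atTop hα hdecay)).sub_const _
  have hzero := tendsto_nhds_unique' atTop_neBot hlim <| tendsto_const_nhds.congr' <|
    (eventually_gt_atTop 0).mono fun R hR =>
      (integral_boundary_annularSector_eq_zero_of_differentiableOn hf hr hR).symm
  linear_combination hzero

end SectorContour

noncomputable def Fx (x : ℝ) (z : ℂ) : ℂ :=
  (z ^ 2)⁻¹ * cexp (-z ^ 2 - 1 / ((x : ℂ) * z) + I * z ^ 4)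

lemma re_Fx_exponent_nonpos {x : ℝ} {z : ℂ} (hx : 0 ≤ x) (hz : 0 ≤ z.re)
    (hz2 : 0 ≤ (z ^ 2).re) (hz4 : 0 ≤ (z ^ 4).im) :
    (-z ^ 2 - 1 / ((x : ℂ) * z) + I * z ^ 4).re ≤ 0 := by
  have hinv : 0 ≤ (1 / ((x : ℂ) * z)).re := by
    rw [one_div, inv_re, re_ofReal_mul]
    exact div_nonneg (mul_nonneg hx hz) (normSq_nonneg _)
  simp only [add_re, sub_re, neg_re, mul_re, I_re, I_im]
  linarith

lemma norm_Fx_le {x ρ θ : ℝ} (hx : 0 ≤ x) (hρ : 0 ≤ ρ) (hθ₀ : 0 ≤ θ) (hθ : θ ≤ π / 8) :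
    ‖Fx x (ρ * cexp (I * θ))‖ ≤ 1 / ρ ^ 2 := by
  have hcos (n : ℕ) (hn : n ≤ 2) : 0 ≤ (((ρ : ℂ) * cexp (I * θ)) ^ n).re := by
    have hn : (n : ℝ) ≤ 2 := by exact_mod_cast hn
    rw [re_ofReal_mul_exp_I_mul_pow]
    exact mul_nonneg (by positivity)
      (Real.cos_nonneg_of_mem_Icc ⟨by nlinarith [pi_pos], by nlinarith [pi_pos]⟩)
  have hsin : 0 ≤ (((ρ : ℂ) * cexp (I * θ)) ^ 4).im := by
    rw [im_ofReal_mul_exp_I_mul_pow]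
    exact mul_nonneg (by positivity)
      (Real.sin_nonneg_of_nonneg_of_le_pi (by positivity) (by push_cast; linarith))
  have hexp := re_Fx_exponent_nonpos hx (by simpa using hcos 1 one_le_two) (hcos 2 le_rfl) hsin
  rw [Fx, norm_mul, norm_inv, norm_pow, norm_ofReal_mul_exp_I_mul hρ, norm_exp, ← one_div]
  exact mul_le_of_le_one_right (by positivity) (Real.exp_le_one_iff.2 hexp)

lemma differentiableOn_Fx {x : ℝ} (hx : x ≠ 0) : DifferentiableOn ℂ (Fx x) {0}ᶜ := by
  intro z hz
  have hz : z ≠ 0 := hz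
  unfold Fx
  fun_prop (disch := simp [hx, hz])

/-- For F_x(z) = z^{-2} exp(−z² − 1/(xz) + i z⁴) and each x > 0,
∫₄^∞ F_x(r) dr = e^{iπ/8} ∫₄^∞ F_x(r e^{iπ/8}) dr + ∫₀^{π/8} F_x(4 e^{iθ}) 4i e^{iθ} dθ. -/
theorem stmt_16 (F : ℝ → ℂ → ℂ)
    (hF : ∀ x : ℝ, ∀ z : ℂ, F x z =
      (z ^ 2)⁻¹ * Complex.exp (-z ^ 2 - 1 / ((x:ℂ) * z) + Complex.I * z ^ 4)) :
    ∀ x : ℝ, 0 < x →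
      (∫ r in Ioi (4:ℝ), F x r)
        = Complex.exp (Complex.I * Real.pi / 8) *
            (∫ r in Ioi (4:ℝ), F x ((r:ℂ) * Complex.exp (Complex.I * Real.pi / 8)))
          + ∫ θ in (0:ℝ)..(Real.pi / 8),
              F x (4 * Complex.exp (Complex.I * θ)) * (4 * Complex.I * Complex.exp (Complex.I * θ)) := by
  intro x hx
  have hFx : F x = Fx x := funext (hF x)
  have hangle : I * (π : ℂ) / 8 = I * ((π / 8 : ℝ) : ℂ) := by push_cast; ring
  have key := integral_Ioi_eq_rotate_add_sectorArcIntegral (differentiableOn_Fx hx.ne')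
    (by norm_num : (0 : ℝ) < 4) (by positivity : 0 ≤ π / 8) (C := 1)
    fun ρ hρ θ hθ => norm_Fx_le hx.le (by linarith) hθ.1 hθ.2
  rw [hFx, hangle, key, sectorArcIntegral]
  norm_num
end
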